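/- arXiv:1803.00117 — 9 statements merged into one kernel-verified Lean document; each statement's English description precedes it below -/
import Mathlib

section
/- (Lemma 1) In the uniform encoding model with parameter u, where d₀ ≤ u ≤ n, the probability of encoding failure satisfies P(encoding failure) ≤ min{ (Σ_{w=d₀}^{u} B₀,w · C(n−w, u−w)) / C(n,u), 1 }. -/
/-- The support of a binary vector: the set of coordinates where it is nonzero. -/
def supp {n : ℕ} (c : Fin n → ZMod 2) : Finset (Fin n) :=
  Finset.univ.filter fun i => c i ≠ 0

/-- The Hamming weight of a binary vector. -/
def wt {n : ℕ} (c : Fin n → ZMod 2) : ℕ := (supp c).card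

/-- In the uniform encoding model with parameter `u`, the sample space consists of pairs
`(U, b)` where `U` is a `u`-element subset of the coordinates and `b` is a binary vector
(only its restriction to `U` matters, so taking `b` uniform on all of `𝔽₂ⁿ` gives the
uniform distribution on `𝔽₂^U`).  `failCount` counts the outcomes for which the linear
system `G₀^U d = b^U` has no solution `d`. -/
def failCount (n l : ℕ) (G : Matrix (Fin n) (Fin l) (ZMod 2)) (u : ℕ) : ℕ :=
  (((Finset.univ : Finset (Fin n)).powersetCard u ×ˢ
      (Finset.univ : Finset (Fin n → ZMod 2))).filter
    fun p => ¬ ∃ d : Fin l → ZMod 2, ∀ i ∈ p.1, G.mulVec d i = p.2 i).card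

open Matrix in
lemma solvable {n l : ℕ} (G : Matrix (Fin n) (Fin l) (ZMod 2)) (U : Finset (Fin n))
    (h : ∀ c : Fin n → ZMod 2, Matrix.vecMul c G = 0 → supp c ⊆ U → c = 0)
    (b : Fin n → ZMod 2) : ∃ d, ∀ i ∈ U, G.mulVec d i = b i := by
  classical
  set A : Matrix {i // i ∈ U} (Fin l) (ZMod 2) := Matrix.of (fun i j => G i.1 j) with hA
  have hker : ∀ c : {i // i ∈ U} → ZMod 2, Matrix.vecMul c A = 0 → c = 0 := by
    intro c hc
    set c' : Fin n → ZMod 2 := fun i => if h : i ∈ U then c ⟨i, h⟩ else 0 with hc'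
    have hvm : Matrix.vecMul c' G = 0 := by
      ext j
      have h0 : (Matrix.vecMul c' G) j = ∑ i : Fin n, c' i * G i j := by
        simp [Matrix.vecMul, dotProduct]
      rw [h0]
      have h1 : ∑ i : Fin n, c' i * G i j = ∑ i ∈ U, c' i * G i j :=
        (Finset.sum_subset (Finset.subset_univ U) (by intro i _ hi; simp [hc', hi])).symm
      have h2 : ∑ i ∈ U, c' i * G i j = ∑ i : {i // i ∈ U}, c i * A i j := by
        rw [← Finset.sum_coe_sort U (fun i => c' i * G i j)]
        exact Finset.sum_congr rfl (fun i _ => by simp [hc', i.2, hA])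
      have h3 : ∑ i : {i // i ∈ U}, c i * A i j = (Matrix.vecMul c A) j := by
        simp [Matrix.vecMul, dotProduct]
      rw [h1, h2, h3, hc]
    have hz := h c' hvm (by
      intro i hi
      simp only [supp, Finset.mem_filter] at hi
      by_contra hmem
      exact hi.2 (by simp [hc', hmem]))
    funext i
    have := congr_fun hz i.1
    simpa [hc', i.2] using this
  -- linear algebra: rows of A are independent, so mulVec is surjective
  have hinj : Function.Injective A.vecMulLinear := by
    rw [← LinearMap.ker_eq_bot]
    refine (Submodule.eq_bot_iff _).mpr (fun c hc => ?_)
    exact hker c (by simpa using hc)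
  have hrankT : Aᵀ.rank = Fintype.card {i // i ∈ U} := by
    rw [Matrix.rank, ← Matrix.vecMulLinear_transpose, Matrix.transpose_transpose,
      LinearMap.finrank_range_of_inj hinj]
    simp
  have hrank : A.rank = Fintype.card {i // i ∈ U} := by
    rw [← Matrix.rank_transpose]; exact hrankT
  have htop : LinearMap.range A.mulVecLin = ⊤ := by
    apply Submodule.eq_top_of_finrank_eq
    rw [← Matrix.rank, hrank]
    simp [Module.finrank_pi]
  have hsurj : Function.Surjective A.mulVec := by
    intro y
    have : y ∈ LinearMap.range A.mulVecLin := htop ▸ Submodule.mem_top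
    obtain ⟨d, hd⟩ := this
    exact ⟨d, hd⟩
  obtain ⟨d, hd⟩ := hsurj (fun i => b i.1)
  exact ⟨d, fun i hi => by
    have := congr_fun hd ⟨i, hi⟩
    simpa [Matrix.mulVec, dotProduct, hA] using this⟩

lemma count_supersets {n u : ℕ} (s : Finset (Fin n)) (hs : s.card ≤ u) :
    ((Finset.univ.powersetCard u).filter (fun U => s ⊆ U)).card
      = (n - s.card).choose (u - s.card) := by
  classical
  have hcompl : sᶜ.card = n - s.card := by rw [Finset.card_compl]; simp
  rw [← hcompl, ← Finset.card_powersetCard (u - s.card) sᶜ]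
  apply Finset.card_bij' (fun U _ => U \ s) (fun V _ => V ∪ s)
  · intro U hU
    simp only [Finset.mem_filter, Finset.mem_powersetCard] at hU
    obtain ⟨⟨_, hcard⟩, hsub⟩ := hU
    rw [Finset.mem_powersetCard]
    constructor
    · intro x hx
      simp only [Finset.mem_sdiff] at hx
      simp [Finset.mem_compl, hx.2]
    · rw [Finset.card_sdiff_of_subset hsub, hcard]
  · intro V hV
    rw [Finset.mem_powersetCard] at hV
    obtain ⟨hsub, hcard⟩ := hV
    have hdisj : Disjoint V s := by
      rw [Finset.disjoint_left]
      intro x hx hxs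
      exact (Finset.mem_compl.mp (hsub hx)) hxs
    simp only [Finset.mem_filter, Finset.mem_powersetCard]
    refine ⟨⟨Finset.subset_univ _, ?_⟩, Finset.subset_union_right⟩
    rw [Finset.card_union_of_disjoint hdisj, hcard]
    omega
  · intro U hU
    simp only [Finset.mem_filter] at hU
    exact Finset.sdiff_union_of_subset hU.2
  · intro V hV
    rw [Finset.mem_powersetCard] at hV
    have hdisj : Disjoint V s := by
      rw [Finset.disjoint_left]
      intro x hx hxs
      exact (Finset.mem_compl.mp (hV.1 hx)) hxs
    exact Finset.union_sdiff_cancel_right hdisj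

lemma count_supersets_empty {n u : ℕ} (s : Finset (Fin n)) (hs : u < s.card) :
    ((Finset.univ.powersetCard u).filter (fun U => s ⊆ U)) = ∅ := by
  classical
  rw [Finset.filter_eq_empty_iff]
  intro U hU hsub
  rw [Finset.mem_powersetCard] at hU
  have := Finset.card_le_card hsub
  omega

lemma wt_eq_zero_iff {n : ℕ} (c : Fin n → ZMod 2) : wt c = 0 ↔ c = 0 := by
  constructor
  · intro h
    funext i
    simp only [Pi.zero_apply]
    by_contra hi
    rw [wt, Finset.card_eq_zero] at h
    have : i ∈ supp c := by simp [supp, hi]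
    simp [h] at this
  · intro h
    subst h
    simp [wt, supp]

theorem stmt2 (n l : ℕ) (G₀ : Matrix (Fin n) (Fin l) (ZMod 2)) (d₀ : ℕ)
    (hdual : ∃ c : Fin n → ZMod 2, Matrix.vecMul c G₀ = 0 ∧ c ≠ 0)
    (hd₀ : IsLeast
      {w : ℕ | ∃ c : Fin n → ZMod 2, Matrix.vecMul c G₀ = 0 ∧ c ≠ 0 ∧ wt c = w} d₀)
    (B : ℕ → ℕ)
    (hB : ∀ w, (B w : ℕ) =
      {c : Fin n → ZMod 2 | Matrix.vecMul c G₀ = 0 ∧ wt c = w}.ncard)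
    (u : ℕ) (hu₁ : d₀ ≤ u) (hu₂ : u ≤ n) :
    (failCount n l G₀ u : ℝ) / ((n.choose u : ℝ) * 2 ^ n)
      ≤ min ((∑ w ∈ Finset.Icc d₀ u,
          (B w : ℝ) * ((n - w).choose (u - w) : ℝ)) / (n.choose u : ℝ)) 1 := by
  classical
  -- d₀ ≥ 1
  have hd₀pos : 1 ≤ d₀ := by
    by_contra hcon
    obtain ⟨c, hcG, hc0, hwt⟩ := hd₀.1
    have : wt c = 0 := by omega
    exact hc0 ((wt_eq_zero_iff c).mp this)
  set D : Finset (Fin n → ZMod 2) :=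
    Finset.univ.filter (fun c => Matrix.vecMul c G₀ = 0 ∧ c ≠ 0) with hD
  set cnt : (Fin n → ZMod 2) → ℕ := fun c =>
    ((Finset.univ.powersetCard u).filter (fun U => supp c ⊆ U)).card with hcnt
  set badU : Finset (Finset (Fin n)) :=
    ((Finset.univ : Finset (Fin n)).powersetCard u).filter
      (fun U => ∃ c ∈ D, supp c ⊆ U) with hbadU
  set T : ℕ := ∑ w ∈ Finset.Icc d₀ u, B w * (n - w).choose (u - w) with hT
  -- step 1: failCount ≤ badU.card * 2^n
  have hcard2 : ((Finset.univ : Finset (Fin n → ZMod 2))).card = 2 ^ n := by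
    rw [Finset.card_univ]
    simp [Fintype.card_fun]
  have step1 : failCount n l G₀ u ≤ badU.card * 2 ^ n := by
    rw [failCount]
    calc _ ≤ (badU ×ˢ (Finset.univ : Finset (Fin n → ZMod 2))).card := by
            apply Finset.card_le_card
            intro p hp
            simp only [Finset.mem_filter, Finset.mem_product] at hp
            obtain ⟨⟨hp1, hp2⟩, hfail⟩ := hp
            rw [Finset.mem_product]
            refine ⟨?_, hp2⟩
            rw [hbadU, Finset.mem_filter]
            refine ⟨hp1, ?_⟩
            by_contra hno
            push_neg at hno
            refine hfail (solvable G₀ p.1 ?_ p.2)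
            intro c hcG hsupp
            by_contra hc0
            exact absurd hsupp (hno c (by simp [hD, hcG, hc0]))
      _ = badU.card * 2 ^ n := by rw [Finset.card_product, hcard2]
  -- step 2: badU.card ≤ ∑ c in D, cnt c
  have step2 : badU.card ≤ ∑ c ∈ D, cnt c := by
    calc badU.card ≤ (D.biUnion (fun c =>
          ((Finset.univ.powersetCard u).filter (fun U => supp c ⊆ U)))).card := by
            apply Finset.card_le_card
            intro U hU
            rw [hbadU, Finset.mem_filter] at hU
            obtain ⟨hU1, c, hc, hsupp⟩ := hU
            exact Finset.mem_biUnion.mpr ⟨c, hc, Finset.mem_filter.mpr ⟨hU1, hsupp⟩⟩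
      _ ≤ ∑ c ∈ D, cnt c := Finset.card_biUnion_le
  -- step 3: ∑ c in D, cnt c ≤ T
  have hwt_ge : ∀ c ∈ D, d₀ ≤ wt c := by
    intro c hc
    rw [hD, Finset.mem_filter] at hc
    exact hd₀.2 ⟨c, hc.2.1, hc.2.2, rfl⟩
  have step3 : ∑ c ∈ D, cnt c ≤ T := by
    have hzero : ∀ c ∈ D, c ∉ D.filter (fun c => wt c ∈ Finset.Icc d₀ u) → cnt c = 0 := by
      intro c hc hnc
      have h1 : wt c ∉ Finset.Icc d₀ u := by
        by_contra hcon
        exact hnc (Finset.mem_filter.mpr ⟨hc, hcon⟩)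
      have h2 : u < wt c := by
        have := hwt_ge c hc
        simp only [Finset.mem_Icc] at h1
        omega
      rw [hcnt]
      simp only
      rw [count_supersets_empty (supp c) h2]
      simp
    have heq1 : ∑ c ∈ D, cnt c = ∑ c ∈ D.filter (fun c => wt c ∈ Finset.Icc d₀ u), cnt c :=
      (Finset.sum_subset (Finset.filter_subset _ _) hzero).symm
    rw [heq1, ← Finset.sum_fiberwise_of_maps_to (g := wt)
      (fun c hc => (Finset.mem_filter.mp hc).2)]
    apply Finset.sum_le_sum
    intro w hw
    rw [Finset.mem_Icc] at hw
    have hconst : ∀ c ∈ (D.filter (fun c => wt c ∈ Finset.Icc d₀ u)).filter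
        (fun c => wt c = w), cnt c = (n - w).choose (u - w) := by
      intro c hc
      simp only [Finset.mem_filter] at hc
      rw [hcnt]
      simp only
      rw [count_supersets (supp c) (by rw [← wt]  at *; omega)]
      rw [← wt, hc.2]
    rw [Finset.sum_congr rfl hconst, Finset.sum_const, smul_eq_mul]
    apply Nat.mul_le_mul_right
    -- card = B w
    have hset : {c : Fin n → ZMod 2 | Matrix.vecMul c G₀ = 0 ∧ wt c = w}
        = ↑((D.filter (fun c => wt c ∈ Finset.Icc d₀ u)).filter (fun c => wt c = w)) := by
      ext c
      simp only [Set.mem_setOf_eq, Finset.coe_filter, Finset.mem_filter, hD,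
        Finset.mem_univ, true_and, Set.mem_setOf_eq, Finset.mem_Icc]
      constructor
      · rintro ⟨h1, h2⟩
        have hc0 : c ≠ 0 := by
          intro h0
          rw [h0] at h2
          have : wt (0 : Fin n → ZMod 2) = 0 := (wt_eq_zero_iff 0).mpr rfl
          omega
        exact ⟨⟨⟨h1, hc0⟩, by omega⟩, h2⟩
      · rintro ⟨⟨⟨h1, _⟩, _⟩, h2⟩
        exact ⟨h1, h2⟩
    have : B w = ((D.filter (fun c => wt c ∈ Finset.Icc d₀ u)).filter
        (fun c => wt c = w)).card := by
      rw [hB w, hset, Set.ncard_coe_finset]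
    omega
  -- total bound
  have htot : failCount n l G₀ u ≤ n.choose u * 2 ^ n := by
    rw [failCount]
    calc _ ≤ (((Finset.univ : Finset (Fin n)).powersetCard u) ×ˢ
          (Finset.univ : Finset (Fin n → ZMod 2))).card := Finset.card_filter_le _ _
      _ = n.choose u * 2 ^ n := by
          rw [Finset.card_product, hcard2, Finset.card_powersetCard, Finset.card_univ,
            Fintype.card_fin]
  have hkey : failCount n l G₀ u ≤ T * 2 ^ n :=
    le_trans step1 (Nat.mul_le_mul_right _ (le_trans step2 step3))
  -- real arithmetic
  have hCpos : (0 : ℝ) < (n.choose u : ℝ) := by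
    exact_mod_cast Nat.choose_pos hu₂
  have h2pos : (0 : ℝ) < (2 : ℝ) ^ n := by positivity
  have hDpos : (0 : ℝ) < (n.choose u : ℝ) * 2 ^ n := by positivity
  apply le_min
  · rw [div_le_div_iff₀ hDpos hCpos]
    have hT' : (failCount n l G₀ u : ℝ) ≤ (∑ w ∈ Finset.Icc d₀ u,
        (B w : ℝ) * ((n - w).choose (u - w) : ℝ)) * 2 ^ n := by
      have : (failCount n l G₀ u : ℝ) ≤ (T : ℝ) * 2 ^ n := by
        exact_mod_cast hkey
      refine le_trans this (le_of_eq ?_)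
      congr 1
      rw [hT]
      push_cast
      ring
    calc (failCount n l G₀ u : ℝ) * (n.choose u : ℝ)
        ≤ ((∑ w ∈ Finset.Icc d₀ u,
            (B w : ℝ) * ((n - w).choose (u - w) : ℝ)) * 2 ^ n) * (n.choose u : ℝ) :=
          mul_le_mul_of_nonneg_right hT' hCpos.le
      _ = (∑ w ∈ Finset.Icc d₀ u,
            (B w : ℝ) * ((n - w).choose (u - w) : ℝ)) * ((n.choose u : ℝ) * 2 ^ n) := by
          ring
  · rw [div_le_one hDpos]
    exact_mod_cast htot
end

section
/- In the uniform encoding model with parameter u, the probability of encoding failure is sandwiched as (1/2) · P(rank(G₀^U) < u) ≤ P(encoding failure) ≤ P(rank(G₀^U) < u). -/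
/-- The rank of the submatrix of `G` consisting of the rows indexed by `U`. -/
noncomputable def subRank {n l : ℕ} (G : Matrix (Fin n) (Fin l) (ZMod 2))
    (U : Finset (Fin n)) : ℕ :=
  (Matrix.of fun (i : {x : Fin n // x ∈ U}) (j : Fin l) => G i.1 j).rank

/-- Number of `u`-element subsets `U` of coordinates with `rank(G^U) < u`. -/
noncomputable def rankLtCount (n l : ℕ) (G : Matrix (Fin n) (Fin l) (ZMod 2))
    (u : ℕ) : ℕ :=
  (((Finset.univ : Finset (Fin n)).powersetCard u).filter
    fun U => subRank G U < u).card

/-!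
For fixed `U`, the system `G₀^U d = b` is solvable iff `b|_U` lies in the column space of `G₀^U`,
a subspace of `𝔽₂^U` of dimension `r = rank G₀^U`. Hence exactly `(2^u - 2^r) · 2^(n-u)` vectors
`b ∈ 𝔽₂ⁿ` are bad: none when `r = u`, and between `2^n / 2` and `2^n` when `r < u`, since a
proper subspace contains at most half of `𝔽₂^U`. Summing over `U` gives the sandwich.
-/

open Finset

section Counting

variable {ι α K V : Type*} [Fintype ι] [DecidableEq ι] [Fintype α]

theorem card_filter_restrict (U : Finset ι) (P : (U → α) → Prop) [DecidablePred P] :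
    #(univ.filter fun b : ι → α => P fun i => b i)
      = #(univ.filter P) * Fintype.card α ^ (Fintype.card ι - #U) := by
  simp only [← Fintype.card_subtype]
  let e := (Equiv.piEquivPiSubtypeProd (· ∈ U) fun _ => α).subtypeEquiv
      (p := fun b => P fun i => b i) (q := fun p => P p.1) fun _ => Iff.rfl
  rw [Fintype.card_congr (e.trans Equiv.prodSubtypeFstEquivSubtypeProd), Fintype.card_prod,
    Fintype.card_fun, Fintype.card_subtype_compl, Fintype.card_coe]

theorem card_filter_notMem_submodule [Field K] [Fintype K] [AddCommGroup V] [Module K V]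
    [Fintype V] [DecidableEq V] (S : Submodule K V) [DecidablePred (· ∈ S)] :
    #(univ.filter (· ∉ S)) = Fintype.card V - Fintype.card K ^ Module.finrank K S := by
  rw [filter_not, card_sdiff_of_subset (filter_subset _ _), card_univ,
    ← Module.card_eq_pow_finrank (V := S), Fintype.card_subtype]

end Counting

variable {n l : ℕ} (G : Matrix (Fin n) (Fin l) (ZMod 2))

def unsolvableRHS (U : Finset (Fin n)) : Finset (Fin n → ZMod 2) :=
  univ.filter fun b => ¬ ∃ d : Fin l → ZMod 2, ∀ i ∈ U, G.mulVec d i = b i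

theorem card_unsolvableRHS (U : Finset (Fin n)) :
    #(unsolvableRHS G U) = (2 ^ #U - 2 ^ subRank G U) * 2 ^ (n - #U) := by
  classical
  let M : Matrix U (Fin l) (ZMod 2) := Matrix.of fun i j => G i.1 j
  have hrange : unsolvableRHS G U
      = univ.filter fun b => (fun i : U => b i) ∉ LinearMap.range M.mulVecLin := by
    ext b
    simp [unsolvableRHS, funext_iff, M, Matrix.mulVec, dotProduct]
  rw [hrange, card_filter_restrict U (· ∉ LinearMap.range M.mulVecLin),
    card_filter_notMem_submodule]
  simp [subRank, Matrix.rank, M]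

theorem card_unsolvableRHS_le (U : Finset (Fin n)) : #(unsolvableRHS G U) ≤ 2 ^ n :=
  calc #(unsolvableRHS G U) ≤ #(univ : Finset (Fin n → ZMod 2)) := card_le_univ _
    _ = 2 ^ n := by simp

theorem card_unsolvableRHS_eq_zero {U : Finset (Fin n)} (h : ¬ subRank G U < #U) :
    #(unsolvableRHS G U) = 0 := by
  rw [card_unsolvableRHS, Nat.sub_eq_zero_of_le (Nat.pow_le_pow_right two_pos (not_lt.1 h)),
    zero_mul]

theorem two_pow_le_two_mul_card_unsolvableRHS {U : Finset (Fin n)} (h : subRank G U < #U) :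
    2 ^ n ≤ 2 * #(unsolvableRHS G U) := by
  have hr : 2 * 2 ^ subRank G U ≤ 2 ^ #U := by
    rw [← pow_succ']; exact Nat.pow_le_pow_right two_pos h
  calc 2 ^ n = 2 ^ #U * 2 ^ (n - #U) := by
        rw [← pow_add, Nat.add_sub_cancel' (card_le_univ U |>.trans_eq (Fintype.card_fin n))]
    _ ≤ 2 * (2 ^ #U - 2 ^ subRank G U) * 2 ^ (n - #U) := by gcongr; omega
    _ = 2 * #(unsolvableRHS G U) := by rw [card_unsolvableRHS, mul_assoc]

theorem failCount_eq_sum (u : ℕ) :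
    failCount n l G u
      = ∑ U ∈ (univ.powersetCard u).filter (fun U => subRank G U < u), #(unsolvableRHS G U) := by
  have hsplit : failCount n l G u = ∑ U ∈ univ.powersetCard u, #(unsolvableRHS G U) := by
    simp only [failCount, unsolvableRHS, card_filter, sum_product]
  rw [hsplit]
  refine (sum_subset (filter_subset _ _) fun U hU hfull => ?_).symm
  apply card_unsolvableRHS_eq_zero
  rw [mem_powersetCard_univ.1 hU]
  exact fun hrank => hfull (mem_filter.2 ⟨hU, hrank⟩)

theorem rankLtCount_mul_two_pow_le_two_mul_failCount (u : ℕ) :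
    rankLtCount n l G u * 2 ^ n ≤ 2 * failCount n l G u := by
  rw [failCount_eq_sum, mul_sum, rankLtCount, card_eq_sum_ones, sum_mul]
  refine sum_le_sum fun U hU => ?_
  obtain ⟨hU, hrank⟩ := mem_filter.1 hU
  rw [← mem_powersetCard_univ.1 hU] at hrank
  simpa using two_pow_le_two_mul_card_unsolvableRHS G hrank

theorem failCount_le_rankLtCount_mul_two_pow (u : ℕ) :
    failCount n l G u ≤ rankLtCount n l G u * 2 ^ n := by
  rw [failCount_eq_sum, rankLtCount, ← smul_eq_mul]
  exact sum_le_card_nsmul _ _ _ fun U _ => card_unsolvableRHS_le G U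

theorem stmt4_general (n l : ℕ) (G₀ : Matrix (Fin n) (Fin l) (ZMod 2))
    (u : ℕ) :
    (1 / 2 : ℝ) * ((rankLtCount n l G₀ u : ℝ) / (n.choose u : ℝ))
        ≤ (failCount n l G₀ u : ℝ) / ((n.choose u : ℝ) * 2 ^ n)
      ∧ (failCount n l G₀ u : ℝ) / ((n.choose u : ℝ) * 2 ^ n)
        ≤ (rankLtCount n l G₀ u : ℝ) / (n.choose u : ℝ) := by
  have hlow : (rankLtCount n l G₀ u : ℝ) * 2 ^ n ≤ 2 * failCount n l G₀ u := by
    exact_mod_cast rankLtCount_mul_two_pow_le_two_mul_failCount G₀ u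
  have hup : (failCount n l G₀ u : ℝ) ≤ rankLtCount n l G₀ u * 2 ^ n := by
    exact_mod_cast failCount_le_rankLtCount_mul_two_pow G₀ u
  rw [mul_comm (n.choose u : ℝ), ← div_div, ← mul_div_assoc]
  constructor
  · gcongr
    rw [le_div_iff₀ (by positivity)]
    linarith
  · gcongr
    rwa [div_le_iff₀ (by positivity)]

theorem stmt4 (n l : ℕ) (G₀ : Matrix (Fin n) (Fin l) (ZMod 2))
    (u : ℕ) (hu₁ : 1 ≤ u) (hu₂ : u ≤ n) :
    (1 / 2 : ℝ) * ((rankLtCount n l G₀ u : ℝ) / (n.choose u : ℝ))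
        ≤ (failCount n l G₀ u : ℝ) / ((n.choose u : ℝ) * 2 ^ n)
      ∧ (failCount n l G₀ u : ℝ) / ((n.choose u : ℝ) * 2 ^ n)
        ≤ (rankLtCount n l G₀ u : ℝ) / (n.choose u : ℝ) :=
  stmt4_general n l G₀ u
end

section
/- Let C ⊆ 𝔽₂ⁿ be a linear code with minimum distance d and weight distribution A_w, and let u be an integer with u ≤ d + ⌊(d−1)/2⌋. Then every u-element subset U of {1,…,n} contains the support of at most one nonzero codeword of C, and consequently the number of u-element subsets U for which there exists a nonzero c ∈ C with supp(c) ⊆ U equals exactly Σ_{w=d}^{u} A_w · C(n−w, u−w). -/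
lemma wt_eq_zero {n : ℕ} {c : Fin n → ZMod 2} : wt c = 0 ↔ c = 0 := by
  simp [wt, supp, Finset.card_eq_zero, Finset.filter_eq_empty_iff, funext_iff]

lemma supp_add {n : ℕ} (c₁ c₂ : Fin n → ZMod 2) :
    supp (c₁ + c₂) = (supp c₁ ∪ supp c₂) \ (supp c₁ ∩ supp c₂) := by
  ext i
  simp only [supp, Finset.mem_filter, Finset.mem_sdiff, Finset.mem_union,
    Finset.mem_inter, Finset.mem_univ, true_and, Pi.add_apply]
  generalize c₁ i = a
  generalize c₂ i = b
  revert a b; decide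

lemma d_pos {n : ℕ} {C : Submodule (ZMod 2) (Fin n → ZMod 2)} {d : ℕ}
    (hd : IsLeast {w : ℕ | ∃ c ∈ C, c ≠ 0 ∧ wt c = w} d) : 1 ≤ d := by
  obtain ⟨c₀, _, hc₀ne, hc₀w⟩ := hd.1
  rcases Nat.eq_zero_or_pos d with h | h
  · exact absurd (wt_eq_zero.mp (h ▸ hc₀w)) hc₀ne
  · exact h

lemma uniq {n : ℕ} (C : Submodule (ZMod 2) (Fin n → ZMod 2)) (d : ℕ)
    (hd : IsLeast {w : ℕ | ∃ c ∈ C, c ≠ 0 ∧ wt c = w} d)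
    (u : ℕ) (hu : u ≤ d + (d - 1) / 2)
    (U : Finset (Fin n)) (hU : U.card = u)
    (c₁ c₂ : Fin n → ZMod 2) (h1 : c₁ ∈ C) (h2 : c₂ ∈ C)
    (hn1 : c₁ ≠ 0) (hn2 : c₂ ≠ 0) (hs1 : supp c₁ ⊆ U) (hs2 : supp c₂ ⊆ U) :
    c₁ = c₂ := by
  by_contra hne
  have hd1 : 1 ≤ d := d_pos hd
  have hsum : c₁ + c₂ ∈ C := C.add_mem h1 h2
  have hsne : c₁ + c₂ ≠ 0 := by
    intro h
    apply hne
    funext i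
    have := congrFun h i
    simp only [Pi.add_apply, Pi.zero_apply] at this
    revert this
    generalize c₁ i = a; generalize c₂ i = b
    revert a b; decide
  have hdlb : d ≤ wt (c₁ + c₂) := hd.2 ⟨c₁ + c₂, hsum, hsne, rfl⟩
  have hd1' : d ≤ wt c₁ := hd.2 ⟨c₁, h1, hn1, rfl⟩
  have hd2' : d ≤ wt c₂ := hd.2 ⟨c₂, h2, hn2, rfl⟩
  have hkey : wt (c₁ + c₂) + (supp c₁ ∩ supp c₂).card = (supp c₁ ∪ supp c₂).card := by
    rw [wt, supp_add]
    exact Finset.card_sdiff_add_card_eq_card Finset.inter_subset_union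
  have hui : (supp c₁ ∪ supp c₂).card + (supp c₁ ∩ supp c₂).card = wt c₁ + wt c₂ :=
    Finset.card_union_add_card_inter _ _
  have hle : (supp c₁ ∪ supp c₂).card ≤ u := by
    rw [← hU]; exact Finset.card_le_card (Finset.union_subset hs1 hs2)
  omega

lemma card_supersets {n u : ℕ} (s : Finset (Fin n)) (hsu : s.card ≤ u) :
    (Finset.univ.filter (fun U : Finset (Fin n) => U.card = u ∧ s ⊆ U)).card
      = (n - s.card).choose (u - s.card) := by
  classical
  have : (Finset.univ.filter (fun U : Finset (Fin n) => U.card = u ∧ s ⊆ U)).card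
      = ((Finset.univ \ s).powersetCard (u - s.card)).card := by
    apply Finset.card_bij' (fun U _ => U \ s) (fun V _ => V ∪ s)
    · intro U hU
      simp only [Finset.mem_filter, Finset.mem_univ, true_and] at hU
      rw [Finset.mem_powersetCard]
      exact ⟨Finset.sdiff_subset_sdiff (Finset.subset_univ U) le_rfl,
        by rw [Finset.card_sdiff_of_subset hU.2, hU.1]⟩
    · intro V hV
      rw [Finset.mem_powersetCard] at hV
      have hdisj : Disjoint V s := by
        rw [Finset.disjoint_left]
        intro x hx
        have := hV.1 hx
        simp only [Finset.mem_sdiff] at this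
        exact this.2
      simp only [Finset.mem_filter, Finset.mem_univ, true_and]
      constructor
      · rw [Finset.card_union_of_disjoint hdisj, hV.2]; omega
      · exact Finset.subset_union_right
    · intro U hU
      simp only [Finset.mem_filter, Finset.mem_univ, true_and] at hU
      exact Finset.sdiff_union_of_subset hU.2
    · intro V hV
      rw [Finset.mem_powersetCard] at hV
      have hdisj : Disjoint V s := by
        rw [Finset.disjoint_left]
        intro x hx
        have := hV.1 hx
        simp only [Finset.mem_sdiff] at this
        exact this.2
      exact Finset.union_sdiff_cancel_right hdisj
  rw [this, Finset.card_powersetCard, Finset.card_sdiff_of_subset (Finset.subset_univ s),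
    Finset.card_univ, Fintype.card_fin]

theorem stmt6 (n : ℕ) (C : Submodule (ZMod 2) (Fin n → ZMod 2)) (d : ℕ)
    (hC : ∃ c ∈ C, c ≠ 0)
    (hd : IsLeast {w : ℕ | ∃ c ∈ C, c ≠ 0 ∧ wt c = w} d)
    (A : ℕ → ℕ)
    (hA : ∀ w, A w = {c : Fin n → ZMod 2 | c ∈ C ∧ wt c = w}.ncard)
    (u : ℕ) (hu : u ≤ d + (d - 1) / 2) :
    (∀ U : Finset (Fin n), U.card = u →
      ∀ c₁ c₂ : Fin n → ZMod 2, c₁ ∈ C → c₂ ∈ C → c₁ ≠ 0 → c₂ ≠ 0 →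
        supp c₁ ⊆ U → supp c₂ ⊆ U → c₁ = c₂)
    ∧ {U : Finset (Fin n) | U.card = u ∧ ∃ c ∈ C, c ≠ 0 ∧ supp c ⊆ U}.ncard
        = ∑ w ∈ Finset.Icc d u, A w * (n - w).choose (u - w) := by
  classical
  have huniq := uniq C d hd u hu
  refine ⟨fun U hU => huniq U hU, ?_⟩
  have hd1 : 1 ≤ d := d_pos hd
  set Cs : Finset (Fin n → ZMod 2) :=
    Finset.univ.filter (fun c => c ∈ C ∧ c ≠ 0 ∧ wt c ≤ u) with hCs
  set F : (Fin n → ZMod 2) → Finset (Finset (Fin n)) :=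
    fun c => Finset.univ.filter (fun U => U.card = u ∧ supp c ⊆ U) with hF
  -- step 1: the set as a biUnion
  have hT : {U : Finset (Fin n) | U.card = u ∧ ∃ c ∈ C, c ≠ 0 ∧ supp c ⊆ U}.ncard
      = (Cs.biUnion F).card := by
    rw [Set.ncard_eq_toFinset_card']
    congr 1
    ext U
    simp only [Set.mem_toFinset, Set.mem_setOf_eq, Finset.mem_biUnion, hCs, hF,
      Finset.mem_filter, Finset.mem_univ, true_and]
    constructor
    · rintro ⟨hUc, c, hcC, hcne, hsub⟩
      exact ⟨c, ⟨hcC, hcne, by rw [← hUc]; exact Finset.card_le_card hsub⟩, hUc, hsub⟩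
    · rintro ⟨c, ⟨hcC, hcne, _⟩, hUc, hsub⟩
      exact ⟨hUc, c, hcC, hcne, hsub⟩
  -- step 2: disjointness
  have hdisj : ∀ c₁ ∈ Cs, ∀ c₂ ∈ Cs, c₁ ≠ c₂ → Disjoint (F c₁) (F c₂) := by
    intro c₁ hc₁ c₂ hc₂ hne
    rw [Finset.disjoint_left]
    intro U hU1 hU2
    simp only [hF, Finset.mem_filter, Finset.mem_univ, true_and] at hU1 hU2
    simp only [hCs, Finset.mem_filter, Finset.mem_univ, true_and] at hc₁ hc₂
    exact hne (huniq U hU1.1 c₁ c₂ hc₁.1 hc₂.1 hc₁.2.1 hc₂.2.1 hU1.2 hU2.2)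
  rw [hT, Finset.card_biUnion hdisj]
  -- step 3: card of F c
  have hFc : ∀ c ∈ Cs, (F c).card = (n - wt c).choose (u - wt c) := by
    intro c hc
    simp only [hCs, Finset.mem_filter, Finset.mem_univ, true_and] at hc
    exact card_supersets (supp c) hc.2.2
  rw [Finset.sum_congr rfl hFc]
  -- step 4: fiberwise sum
  have hmaps : ∀ c ∈ Cs, wt c ∈ Finset.Icc d u := by
    intro c hc
    simp only [hCs, Finset.mem_filter, Finset.mem_univ, true_and] at hc
    exact Finset.mem_Icc.mpr ⟨hd.2 ⟨c, hc.1, hc.2.1, rfl⟩, hc.2.2⟩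
  rw [← Finset.sum_fiberwise_of_maps_to hmaps (fun c => (n - wt c).choose (u - wt c))]
  apply Finset.sum_congr rfl
  intro w hw
  rw [Finset.mem_Icc] at hw
  have hfiber : Cs.filter (fun c => wt c = w)
      = Finset.univ.filter (fun c => c ∈ C ∧ wt c = w) := by
    ext c
    simp only [hCs, Finset.filter_filter, Finset.mem_filter, Finset.mem_univ, true_and]
    constructor
    · rintro ⟨⟨hcC, _, _⟩, hw'⟩; exact ⟨hcC, hw'⟩
    · rintro ⟨hcC, hw'⟩
      refine ⟨⟨hcC, ?_, by omega⟩, hw'⟩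
      intro h
      rw [h] at hw'
      have : wt (0 : Fin n → ZMod 2) = 0 := wt_eq_zero.mpr rfl
      omega
  calc ∑ c ∈ Cs.filter (fun c => wt c = w), (n - wt c).choose (u - wt c)
      = ∑ _c ∈ Cs.filter (fun c => wt c = w), (n - w).choose (u - w) := by
        apply Finset.sum_congr rfl
        intro c hc
        rw [Finset.mem_filter] at hc
        rw [hc.2]
    _ = (Cs.filter (fun c => wt c = w)).card * (n - w).choose (u - w) := by
        rw [Finset.sum_const, smul_eq_mul]
    _ = A w * (n - w).choose (u - w) := by
        congr 1
        rw [hfiber, hA w, Set.ncard_eq_toFinset_card']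
        congr 1
        ext c
        simp [Set.mem_toFinset]
end

section
/- If u is an integer with u ≤ d₀ + ⌊(d₀−1)/2⌋, then for every u-element subset U of {1,…,n}, the rank of G₀^U is at least u − 1. -/
lemma wt_triple {n : ℕ} (U : Finset (Fin n)) (c₁ c₂ : Fin n → ZMod 2)
    (h₁ : ∀ i ∉ U, c₁ i = 0) (h₂ : ∀ i ∉ U, c₂ i = 0) :
    wt c₁ + wt c₂ + wt (c₁ + c₂) ≤ 2 * U.card := by
  classical
  have key : ∀ a b : ZMod 2,
      ((if a ≠ 0 then 1 else 0) + (if b ≠ 0 then 1 else 0)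
        + (if a + b ≠ 0 then 1 else 0) : ℕ) ≤ 2 := by decide
  have hcard : 2 * U.card = ∑ i : Fin n, (if i ∈ U then 2 else 0) := by
    rw [Finset.sum_ite_mem, Finset.univ_inter, Finset.sum_const, smul_eq_mul, mul_comm]
  simp only [wt, supp, Finset.card_filter]
  rw [hcard, ← Finset.sum_add_distrib, ← Finset.sum_add_distrib]
  apply Finset.sum_le_sum
  intro i _
  by_cases hi : i ∈ U
  · simp only [hi, if_true, Pi.add_apply]
    exact key (c₁ i) (c₂ i)
  · simp [hi, h₁ i hi, h₂ i hi]

theorem stmt7 (n l : ℕ) (G₀ : Matrix (Fin n) (Fin l) (ZMod 2)) (d₀ : ℕ)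
    (hdual : ∃ c : Fin n → ZMod 2, Matrix.vecMul c G₀ = 0 ∧ c ≠ 0)
    (hd₀ : IsLeast
      {w : ℕ | ∃ c : Fin n → ZMod 2, Matrix.vecMul c G₀ = 0 ∧ c ≠ 0 ∧ wt c = w} d₀)
    (u : ℕ) (hu : u ≤ d₀ + (d₀ - 1) / 2)
    (U : Finset (Fin n)) (hU : U.card = u) :
    u - 1 ≤ subRank G₀ U := by
  classical
  set M : Matrix {x : Fin n // x ∈ U} (Fin l) (ZMod 2) :=
    Matrix.of fun (i : {x : Fin n // x ∈ U}) (j : Fin l) => G₀ i.1 j with hM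
  -- extension by zero
  set ext : ({x : Fin n // x ∈ U} → ZMod 2) → (Fin n → ZMod 2) :=
    fun c i => if h : i ∈ U then c ⟨i, h⟩ else 0 with hext
  have ext_add : ∀ x y, ext (x + y) = ext x + ext y := by
    intro x y; funext i
    by_cases hi : i ∈ U <;> simp [hext, hi]
  have ext_ne : ∀ c, c ≠ 0 → ext c ≠ 0 := by
    intro c hc h
    apply hc
    funext i
    have := congrFun h i.1
    simpa [hext, i.2] using this
  have ext_out : ∀ c, ∀ i ∉ U, ext c i = 0 := by
    intro c i hi; simp [hext, hi]
  have ext_vecMul : ∀ c, Matrix.vecMul (ext c) G₀ = Matrix.vecMul c M := by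
    intro c
    funext j
    simp only [Matrix.vecMul, dotProduct]
    rw [← Finset.sum_subset (Finset.subset_univ U) (by
      intro i _ hi
      simp [hext, hi])]
    rw [Finset.univ_eq_attach, ← Finset.sum_attach U (fun i => ext c i * G₀ i j)]
    apply Finset.sum_congr rfl
    intro i _
    simp [hext, i.2, hM]
  -- weight lower bound on dual codewords
  have hwt : ∀ c : Fin n → ZMod 2, Matrix.vecMul c G₀ = 0 → c ≠ 0 → d₀ ≤ wt c := by
    intro c h1 h2
    exact hd₀.2 ⟨c, h1, h2, rfl⟩
  have hd1 : 1 ≤ d₀ := by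
    obtain ⟨c, hc1, hc2, hc3⟩ := hd₀.1
    rcases Nat.eq_zero_or_pos d₀ with h | h
    · exfalso
      apply hc2
      funext i
      show c i = 0
      have hse : supp c = ∅ := Finset.card_eq_zero.mp (hc3.trans h)
      by_contra hci
      have hmem : i ∈ supp c := Finset.mem_filter.mpr ⟨Finset.mem_univ i, hci⟩
      rw [hse] at hmem
      exact absurd hmem (Finset.notMem_empty i)
    · exact h
  -- key uniqueness claim
  have key : ∀ x y : {x : Fin n // x ∈ U} → ZMod 2,
      Matrix.vecMul x M = 0 → Matrix.vecMul y M = 0 → x ≠ 0 → y ≠ 0 → x = y := by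
    intro x y hx hy hx0 hy0
    by_contra hxy
    have hz0 : x + y ≠ 0 := by
      intro h
      apply hxy
      have hab : ∀ a b : ZMod 2, a + b = 0 → a = b := by decide
      funext i
      exact hab _ _ (congrFun h i)
    have hzc : Matrix.vecMul (x + y) M = 0 := by
      rw [Matrix.add_vecMul, hx, hy, add_zero]
    have w1 : d₀ ≤ wt (ext x) := hwt _ (by rw [ext_vecMul, hx]) (ext_ne _ hx0)
    have w2 : d₀ ≤ wt (ext y) := hwt _ (by rw [ext_vecMul, hy]) (ext_ne _ hy0)
    have w3 : d₀ ≤ wt (ext x + ext y) := by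
      rw [← ext_add]
      exact hwt _ (by rw [ext_vecMul, hzc]) (ext_ne _ hz0)
    have htri := wt_triple U (ext x) (ext y) (ext_out x) (ext_out y)
    rw [hU] at htri
    omega
  -- kernel has dimension ≤ 1
  set K := LinearMap.ker (Matrix.mulVecLin M.transpose) with hK
  have kmem : ∀ x, x ∈ K ↔ Matrix.vecMul x M = 0 := by
    intro x
    rw [hK, LinearMap.mem_ker, Matrix.mulVecLin_apply, Matrix.mulVec_transpose]
  have hKle : Module.finrank (ZMod 2) K ≤ 1 := by
    by_cases hbot : K = ⊥
    · rw [hbot]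
      simp
    · obtain ⟨c₀, hc₀K, hc₀⟩ := Submodule.ne_bot_iff K |>.mp hbot
      have hle : K ≤ Submodule.span (ZMod 2) {c₀} := by
        intro x hx
        by_cases hx0 : x = 0
        · rw [hx0]; exact Submodule.zero_mem _
        · have : x = c₀ := key x c₀ ((kmem x).mp hx) ((kmem c₀).mp hc₀K) hx0 hc₀
          rw [this]
          exact Submodule.mem_span_singleton_self c₀
      calc Module.finrank (ZMod 2) K
          ≤ Module.finrank (ZMod 2) (Submodule.span (ZMod 2) {c₀}) :=
            Submodule.finrank_mono hle
        _ = 1 := finrank_span_singleton hc₀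
  -- rank-nullity
  have hrn := LinearMap.finrank_range_add_finrank_ker (Matrix.mulVecLin M.transpose)
  rw [Module.finrank_fintype_fun_eq_card, Fintype.card_coe, hU, ← hK] at hrn
  have hrank : subRank G₀ U = M.transpose.rank := by
    rw [subRank, ← Matrix.rank_transpose]
  rw [hrank, Matrix.rank]
  omega
end

section
/- (Lemma 2) In the uniform encoding model with parameter u, if d₀ ≤ u ≤ d₀ + ⌊(d₀−1)/2⌋ then the probability of encoding failure is exactly P(encoding failure) = (1/2) · (Σ_{w=d₀}^{u} B₀,w · C(n−w, u−w)) / C(n,u). -/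
open Finset Matrix

theorem Matrix.exists_mulVec_eq_iff_forall_vecMul_eq_zero {K m k : Type*} [Field K] [Fintype m]
    [Fintype k] (A : Matrix m k K) (b : m → K) :
    (∃ x, A *ᵥ x = b) ↔ ∀ y, y ᵥ* A = 0 → y ⬝ᵥ b = 0 := by
  classical
  refine ⟨fun ⟨x, hx⟩ y hy => by rw [← hx, dotProduct_mulVec, hy, zero_dotProduct], ?_⟩
  contrapose!
  intro hb
  obtain ⟨f, hfb, hf⟩ := Submodule.exists_dual_map_eq_bot_of_notMem
    (p := LinearMap.range A.mulVecLin) (fun ⟨x, hx⟩ => hb x hx) inferInstance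
  set y := (dotProductEquiv K m).symm f
  have hy : ∀ v, y ⬝ᵥ v = f v := fun v =>
    LinearMap.congr_fun ((dotProductEquiv K m).apply_symm_apply f) v
  refine ⟨y, dotProduct_eq_zero _ fun x => ?_, by rwa [hy]⟩
  rw [← dotProduct_mulVec, hy, ← Submodule.mem_bot K, ← hf]
  exact Submodule.mem_map_of_mem ⟨x, rfl⟩

theorem Matrix.exists_mulVec_eqOn_iff {K ι k : Type*} [Field K] [Fintype ι] [DecidableEq ι]
    [Fintype k] (G : Matrix ι k K) (U : Finset ι) (b : ι → K) :
    (∃ x, ∀ i ∈ U, (G *ᵥ x) i = b i) ↔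
      ∀ c : ι → K, (∀ i ∉ U, c i = 0) → c ᵥ* G = 0 → c ⬝ᵥ b = 0 := by
  -- Keeping only the rows in `U` is left multiplication by the diagonal indicator of `U`.
  set χ : ι → K := fun i => if i ∈ U then 1 else 0
  have hχ : ∀ v : ι → K, (∀ i ∉ U, v i = 0) ↔ v ᵥ* diagonal χ = v := by
    intro v
    simp only [vecMul_diagonal, funext_iff, χ]
    refine forall_congr' fun i => ?_
    by_cases hi : i ∈ U <;> simp [hi, eq_comm]
  calc (∃ x, ∀ i ∈ U, (G *ᵥ x) i = b i)
      ↔ ∃ x, (diagonal χ * G) *ᵥ x = diagonal χ *ᵥ b := by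
        refine exists_congr fun x => ?_
        simp only [← mulVec_mulVec, mulVec_diagonal, funext_iff, χ]
        refine forall_congr' fun i => ?_
        by_cases hi : i ∈ U <;> simp [hi]
    _ ↔ ∀ y, (y ᵥ* diagonal χ) ᵥ* G = 0 → (y ᵥ* diagonal χ) ⬝ᵥ b = 0 := by
        rw [exists_mulVec_eq_iff_forall_vecMul_eq_zero]
        simp only [← vecMul_vecMul, dotProduct_mulVec]
    _ ↔ ∀ c : ι → K, (∀ i ∉ U, c i = 0) → c ᵥ* G = 0 → c ⬝ᵥ b = 0 := by
        refine ⟨fun h c hc => (hχ c).mp hc ▸ h c, fun h y => h _ ((hχ _).mpr ?_)⟩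
        rw [vecMul_vecMul, diagonal_mul_diagonal]
        congr 2 with i
        by_cases hi : i ∈ U <;> simp [χ, hi]

theorem wt_pos {n : ℕ} {c : Fin n → ZMod 2} (hc : c ≠ 0) : 0 < wt c := by
  obtain ⟨i, hi⟩ := Function.ne_iff.mp hc
  exact card_pos.mpr ⟨i, by simpa [supp] using hi⟩

theorem supp_subset_iff {n : ℕ} {c : Fin n → ZMod 2} {U : Finset (Fin n)} :
    supp c ⊆ U ↔ ∀ i ∉ U, c i = 0 := by
  simp only [supp, subset_iff, mem_filter, mem_univ, true_and]
  exact forall_congr' fun i => not_imp_comm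

theorem wt_add_add_wt_add_wt {n : ℕ} (c₁ c₂ : Fin n → ZMod 2) :
    wt (c₁ + c₂) + wt c₁ + wt c₂ = 2 * #(supp c₁ ∪ supp c₂) := by
  simp only [wt, supp, ← filter_or, card_filter, ← sum_add_distrib, mul_sum, Pi.add_apply]
  refine sum_congr rfl fun i _ => ?_
  generalize c₁ i = a, c₂ i = b
  revert a b
  decide

theorem two_mul_card_dotProduct_ne_zero {ι : Type*} [Fintype ι] [DecidableEq ι]
    {c : ι → ZMod 2} (hc : c ≠ 0) :
    2 * #{b : ι → ZMod 2 | c ⬝ᵥ b ≠ 0} = 2 ^ Fintype.card ι := by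
  let f : (ι → ZMod 2) →+ ZMod 2 := AddMonoidHom.mk' (c ⬝ᵥ ·) (dotProduct_add c)
  have hne : ∀ a : ZMod 2, a ≠ 0 ↔ a = 1 := by decide
  obtain ⟨i, hi⟩ := Function.ne_iff.mp hc
  have hfi : f (Pi.single i 1) = 1 := by
    simpa [f, hne] using hi
  have hfibers : #{b | f b = 0} = #{b | f b = 1} :=
    AddMonoidHom.card_fiber_eq_of_mem_range f ⟨0, f.map_zero⟩ ⟨_, hfi⟩
  have htotal := card_filter_add_card_filter_not (s := univ) (fun b => f b = 1)
  simp only [← hne, not_not, card_univ, Fintype.card_fun, ZMod.card] at htotal hfibers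
  simp only [f, AddMonoidHom.mk'_apply] at htotal hfibers
  rw [← htotal, ← hfibers]
  ring

theorem not_exists_mulVec_eqOn_iff {n l : ℕ} {G : Matrix (Fin n) (Fin l) (ZMod 2)}
    {U : Finset (Fin n)} {b : Fin n → ZMod 2} :
    (¬∃ d, ∀ i ∈ U, (G *ᵥ d) i = b i) ↔ ∃ c, c ᵥ* G = 0 ∧ supp c ⊆ U ∧ c ⬝ᵥ b ≠ 0 := by
  simp only [exists_mulVec_eqOn_iff, supp_subset_iff]
  push Not
  exact exists_congr fun c => ⟨fun ⟨hs, hc, hb⟩ => ⟨hc, hs, hb⟩, fun ⟨hc, hs, hb⟩ => ⟨hs, hc, hb⟩⟩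

theorem eq_of_vecMul_eq_zero_of_supp_subset {n l : ℕ} {G : Matrix (Fin n) (Fin l) (ZMod 2)}
    {d₀ : ℕ} (hmin : ∀ c : Fin n → ZMod 2, c ᵥ* G = 0 → c ≠ 0 → d₀ ≤ wt c)
    {U : Finset (Fin n)} (hU : #U ≤ d₀ + (d₀ - 1) / 2) {c₁ c₂ : Fin n → ZMod 2}
    (h₁ : c₁ ᵥ* G = 0) (h₂ : c₂ ᵥ* G = 0) (hc₁ : c₁ ≠ 0) (hc₂ : c₂ ≠ 0)
    (hs₁ : supp c₁ ⊆ U) (hs₂ : supp c₂ ⊆ U) : c₁ = c₂ := by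
  by_contra hne
  have hsum : c₁ + c₂ ≠ 0 := fun h => hne (eq_of_sub_eq_zero (by rwa [ZModModule.sub_eq_add]))
  have hw := wt_add_add_wt_add_wt c₁ c₂
  have hunion := card_le_card (union_subset hs₁ hs₂)
  have hw₁₂ := hmin _ (by rw [add_vecMul, h₁, h₂, add_zero]) hsum
  have hw₁ := hmin _ h₁ hc₁
  have hw₂ := hmin _ h₂ hc₂
  have hpos := wt_pos hc₁
  omega

section Counting

variable {n l : ℕ} (G : Matrix (Fin n) (Fin l) (ZMod 2)) {d₀ u : ℕ}

theorem failCount_eq_sum_s8 (hmin : ∀ c : Fin n → ZMod 2, c ᵥ* G = 0 → c ≠ 0 → d₀ ≤ wt c)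
    (hu : u ≤ d₀ + (d₀ - 1) / 2) :
    failCount n l G u = ∑ c ∈ {c : Fin n → ZMod 2 | c ᵥ* G = 0 ∧ wt c ∈ Icc d₀ u},
      #{U ∈ univ.powersetCard u | supp c ⊆ U} * #{b : Fin n → ZMod 2 | c ⬝ᵥ b ≠ 0} := by
  simp only [← card_product]
  rw [failCount, ← card_biUnion]
  · congr 1
    ext ⟨U, b⟩
    simp only [mem_filter, mem_product, mem_biUnion, mem_powersetCard_univ, mem_univ, true_and,
      not_exists_mulVec_eqOn_iff, mem_Icc, and_true]
    constructor
    · rintro ⟨hU, c, hc, hs, hb⟩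
      have hc₀ : c ≠ 0 := by rintro rfl; exact hb (zero_dotProduct b)
      exact ⟨c, ⟨hc, hmin c hc hc₀, hU ▸ card_le_card hs⟩, ⟨hU, hs⟩, hb⟩
    · rintro ⟨c, ⟨hc, -⟩, ⟨hU, hs⟩, hb⟩
      exact ⟨hU, c, hc, hs, hb⟩
  · intro c₁ hc₁ c₂ hc₂ hne
    simp only [Function.onFun, disjoint_left, mem_product, mem_filter, mem_powersetCard_univ,
      mem_univ, true_and, coe_filter, Set.mem_ofPred_eq] at hc₁ hc₂ ⊢
    rintro ⟨U, b⟩ ⟨⟨hU, hs₁⟩, hb₁⟩ ⟨⟨-, hs₂⟩, hb₂⟩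
    refine hne (eq_of_vecMul_eq_zero_of_supp_subset hmin (hU ▸ hu) hc₁.1 hc₂.1 ?_ ?_ hs₁ hs₂)
    · rintro rfl; exact hb₁ (zero_dotProduct b)
    · rintro rfl; exact hb₂ (zero_dotProduct b)

theorem two_mul_failCount (hd₀ : 0 < d₀)
    (hmin : ∀ c : Fin n → ZMod 2, c ᵥ* G = 0 → c ≠ 0 → d₀ ≤ wt c)
    (hu : u ≤ d₀ + (d₀ - 1) / 2) :
    2 * failCount n l G u = 2 ^ n * ∑ w ∈ Icc d₀ u,
      #{c : Fin n → ZMod 2 | c ᵥ* G = 0 ∧ wt c = w} * (n - w).choose (u - w) := by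
  set D : Finset (Fin n → ZMod 2) := {c | c ᵥ* G = 0 ∧ wt c ∈ Icc d₀ u}
  have hD : ∀ c ∈ D, c ᵥ* G = 0 ∧ d₀ ≤ wt c ∧ wt c ≤ u := fun c hc => by
    simpa only [D, mem_filter, mem_univ, true_and, mem_Icc] using hc
  calc 2 * failCount n l G u
      = ∑ c ∈ D, #{U ∈ univ.powersetCard u | supp c ⊆ U} * (2 * #{b | c ⬝ᵥ b ≠ 0}) := by
        rw [failCount_eq_sum_s8 G hmin hu, mul_sum]
        exact sum_congr rfl fun c _ => by ring
    _ = ∑ c ∈ D, (n - wt c).choose (u - wt c) * 2 ^ n := by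
        refine sum_congr rfl fun c hc => ?_
        obtain ⟨-, hd₀c, hcu⟩ := hD c hc
        have hc₀ : c ≠ 0 := by rintro rfl; simp [wt, supp] at hd₀c; omega
        rw [two_mul_card_dotProduct_ne_zero hc₀, Fintype.card_fin,
          card_filter_powersetCard_subset _ _ _ (subset_univ _) hcu, card_univ, Fintype.card_fin]
        rfl
    _ = 2 ^ n * ∑ w ∈ Icc d₀ u, ∑ c ∈ D with wt c = w, (n - wt c).choose (u - wt c) := by
        rw [sum_fiberwise_of_maps_to fun c hc => mem_Icc.mpr (hD c hc).2, mul_comm, sum_mul]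
    _ = _ := by
        congr 1
        refine sum_congr rfl fun w hw => ?_
        rw [sum_const_nat fun c hc => by rw [(mem_filter.mp hc).2]]
        congr 2
        ext c
        simp only [D, mem_filter, mem_univ, true_and]
        constructor
        · rintro ⟨⟨hc, -⟩, rfl⟩; exact ⟨hc, rfl⟩
        · rintro ⟨hc, rfl⟩; exact ⟨⟨hc, hw⟩, rfl⟩

end Counting

theorem stmt8_general (n l : ℕ) (G₀ : Matrix (Fin n) (Fin l) (ZMod 2)) (d₀ : ℕ)
    (hd₀ : IsLeast
      {w : ℕ | ∃ c : Fin n → ZMod 2, Matrix.vecMul c G₀ = 0 ∧ c ≠ 0 ∧ wt c = w} d₀)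
    (B : ℕ → ℕ)
    (hB : ∀ w, (B w : ℕ) =
      {c : Fin n → ZMod 2 | Matrix.vecMul c G₀ = 0 ∧ wt c = w}.ncard)
    (u : ℕ) (hu₂ : u ≤ d₀ + (d₀ - 1) / 2) :
    (failCount n l G₀ u : ℝ) / ((n.choose u : ℝ) * 2 ^ n)
      = (1 / 2 : ℝ) * ((∑ w ∈ Finset.Icc d₀ u,
          (B w : ℝ) * ((n - w).choose (u - w) : ℝ)) / (n.choose u : ℝ)) := by
  obtain ⟨c, -, hc, hwc⟩ := hd₀.1
  have hmin : ∀ c, c ᵥ* G₀ = 0 → c ≠ 0 → d₀ ≤ wt c := fun c h hc => hd₀.2 ⟨c, h, hc, rfl⟩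
  have hB' : ∀ w, B w = #{c : Fin n → ZMod 2 | c ᵥ* G₀ = 0 ∧ wt c = w} := fun w => by
    rw [hB, Set.ncard_eq_toFinset_card', Set.toFinset_ofPred]
  have hcount : (failCount n l G₀ u : ℝ) / 2 ^ n
      = (∑ w ∈ Icc d₀ u, (B w : ℝ) * ((n - w).choose (u - w) : ℝ)) / 2 := by
    have h := congrArg (Nat.cast : ℕ → ℝ) (two_mul_failCount G₀ (hwc ▸ wt_pos hc) hmin hu₂)
    simp only [← hB'] at h
    push_cast at h
    field_simp
    linarith
  rw [mul_comm, ← div_div, hcount]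
  ring

theorem stmt8 (n l : ℕ) (G₀ : Matrix (Fin n) (Fin l) (ZMod 2)) (d₀ : ℕ)
    (hdual : ∃ c : Fin n → ZMod 2, Matrix.vecMul c G₀ = 0 ∧ c ≠ 0)
    (hd₀ : IsLeast
      {w : ℕ | ∃ c : Fin n → ZMod 2, Matrix.vecMul c G₀ = 0 ∧ c ≠ 0 ∧ wt c = w} d₀)
    (B : ℕ → ℕ)
    (hB : ∀ w, (B w : ℕ) =
      {c : Fin n → ZMod 2 | Matrix.vecMul c G₀ = 0 ∧ wt c = w}.ncard)
    (u : ℕ) (hu₁ : d₀ ≤ u) (hu₂ : u ≤ d₀ + (d₀ - 1) / 2) (hun : u ≤ n) :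
    (failCount n l G₀ u : ℝ) / ((n.choose u : ℝ) * 2 ^ n)
      = (1 / 2 : ℝ) * ((∑ w ∈ Finset.Icc d₀ u,
          (B w : ℝ) * ((n - w).choose (u - w) : ℝ)) / (n.choose u : ℝ)) :=
  stmt8_general n l G₀ d₀ hd₀ B hB u hu₂
end

section
/- (Corollary 1) Let s be a random defect pattern with parameter β, let t ∈ 𝔽₂ⁿ be an arbitrary fixed vector, and let b ∈ 𝔽₂^{U(s)} be defined by bᵢ = tᵢ + sᵢ for i ∈ U(s) (where sᵢ ∈ {0,1} is the stuck-at value). Then the probability that the linear system G₀^{U(s)} d = b (unknown d ∈ 𝔽₂ˡ) has no solution is at most Σ_{u=d₀}^{n} β^{u} (1−β)^{n−u} Σ_{w=d₀}^{u} B₀,w · C(n−w, u−w). -/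
/-- A defect pattern is `s : Fin n → Option (ZMod 2)`, where `s i = none` means cell `i`
is normal (`λ`) and `s i = some v` means cell `i` is stuck at value `v`.
`defectWt β s` is the probability of the pattern `s` when the cells are i.i.d. with
`P(sᵢ = 0) = P(sᵢ = 1) = β/2` and `P(sᵢ = λ) = 1 - β`. -/
noncomputable def defectWt (n : ℕ) (β : ℝ) (s : Fin n → Option (ZMod 2)) : ℝ :=
  ∏ i, if s i = none then 1 - β else β / 2

lemma dual_witness {n l : ℕ} (G₀ : Matrix (Fin n) (Fin l) (ZMod 2))
    (t : Fin n → (ZMod 2)) (s : Fin n → Option (ZMod 2))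
    (h : ¬ ∃ d : Fin l → (ZMod 2),
        ∀ i, ∀ v : (ZMod 2), s i = some v → G₀.mulVec d i = t i + v) :
    ∃ c : Fin n → (ZMod 2), Matrix.vecMul c G₀ = 0 ∧ c ≠ 0 ∧
      ∀ i, c i ≠ 0 → s i ≠ none := by
  classical
  set b : Fin n → (ZMod 2) := fun i => (s i).elim 0 (fun v => t i + v) with hb
  let K : Submodule (ZMod 2) (Fin n → (ZMod 2)) :=
    { carrier := {x | ∀ i, s i ≠ none → x i = 0}
      add_mem' := fun hx hy i hi => by simp [hx i hi, hy i hi]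
      zero_mem' := fun i _ => rfl
      smul_mem' := fun a x hx i hi => by simp [hx i hi] }
  set S : Submodule (ZMod 2) (Fin n → (ZMod 2)) := LinearMap.range G₀.mulVecLin ⊔ K with hS
  have hbS : b ∉ S := by
    intro hmem
    rw [hS, Submodule.mem_sup] at hmem
    obtain ⟨y, ⟨d, rfl⟩, z, hz, hsum⟩ := hmem
    refine h ⟨d, fun i v hiv => ?_⟩
    have hzi : z i = 0 := hz i (by simp [hiv])
    have := congrFun hsum i
    simp only [Pi.add_apply, hzi, add_zero] at this
    rw [show G₀.mulVecLin d = G₀.mulVec d from rfl] at this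
    rw [this, hb]; simp [hiv]
  have hq : (Submodule.Quotient.mk b : (Fin n → (ZMod 2)) ⧸ S) ≠ 0 :=
    fun hh => hbS ((Submodule.Quotient.mk_eq_zero S).1 hh)
  have : ¬ ∀ φ : Module.Dual (ZMod 2) ((Fin n → (ZMod 2)) ⧸ S), φ (Submodule.Quotient.mk b) = 0 := by
    rw [Module.forall_dual_apply_eq_zero_iff]; exact hq
  push_neg at this
  obtain ⟨ψ, hψ⟩ := this
  set φ : (Fin n → (ZMod 2)) →ₗ[(ZMod 2)] (ZMod 2) := ψ.comp S.mkQ with hφ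
  have hφS : ∀ x ∈ S, φ x = 0 := by
    intro x hx
    simp only [hφ, LinearMap.comp_apply, Submodule.mkQ_apply]
    rw [(Submodule.Quotient.mk_eq_zero S).2 hx, map_zero]
  set c : Fin n → (ZMod 2) := fun i => φ (Pi.single i 1) with hc
  have hrep : ∀ x : Fin n → (ZMod 2), φ x = dotProduct x c := by
    intro x
    rw [LinearMap.pi_apply_eq_sum_univ φ x]
    unfold dotProduct
    refine Finset.sum_congr rfl fun i _ => ?_
    rw [smul_eq_mul, hc]
    congr 2
    ext j
    simp [Pi.single_apply, eq_comm]
  refine ⟨c, ?_, ?_, ?_⟩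
  · ext j
    have h1 : ∀ d : Fin l → (ZMod 2), dotProduct (Matrix.vecMul c G₀) d = 0 := by
      intro d
      rw [← Matrix.dotProduct_mulVec]
      rw [dotProduct_comm, ← hrep]
      exact hφS _ (Submodule.mem_sup_left ⟨d, rfl⟩)
    have := h1 (Pi.single j 1)
    rw [dotProduct_single, mul_one] at this
    simpa using this
  · intro hc0
    apply hψ
    have : φ b = 0 := by rw [hrep, hc0]; simp [dotProduct]
    simpa [hφ] using this
  · intro i hci hnone
    apply hci
    rw [hc]
    apply hφS
    apply Submodule.mem_sup_right
    intro j hj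
    rw [Pi.single_apply]
    by_cases hji : j = i
    · subst hji; exact absurd hnone hj
    · simp [hji]

lemma prob_supp {n : ℕ} (β : ℝ) (c : Fin n → ZMod 2) :
    ∑ s : Fin n → Option (ZMod 2),
      (if ∀ i, c i ≠ 0 → s i ≠ none then (1:ℝ) else 0) * defectWt n β s
    = β ^ wt c := by
  classical
  have step1 : ∀ s : Fin n → Option (ZMod 2),
      (if ∀ i, c i ≠ 0 → s i ≠ none then (1:ℝ) else 0) * defectWt n β s
      = ∏ i, (if c i ≠ 0 → s i ≠ none then (if s i = none then 1 - β else β / 2) else 0) := by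
    intro s
    by_cases h : ∀ i, c i ≠ 0 → s i ≠ none
    · rw [if_pos h, one_mul, defectWt]
      exact Finset.prod_congr rfl fun i _ => (if_pos (h i)).symm
    · rw [if_neg h, zero_mul]
      push_neg at h
      obtain ⟨i, hi1, hi2⟩ := h
      exact (Finset.prod_eq_zero (Finset.mem_univ i)
        (by rw [if_neg]; push_neg; exact ⟨hi1, hi2⟩)).symm
  simp only [step1]
  have step2 := Finset.prod_univ_sum (fun _ : Fin n => (Finset.univ : Finset (Option (ZMod 2))))
    (fun i o => (if c i ≠ 0 → o ≠ none then (if o = none then 1 - β else β / 2) else (0:ℝ)))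
  rw [Fintype.piFinset_univ] at step2
  rw [← step2]
  have factor : ∀ i : Fin n,
      (∑ o : Option (ZMod 2), if c i ≠ 0 → o ≠ none then (if o = none then 1 - β else β / 2) else (0:ℝ))
      = if c i ≠ 0 then β else 1 := by
    intro i
    rw [Fintype.sum_option]
    have heach : ∀ v : ZMod 2, (if c i ≠ 0 → (some v : Option (ZMod 2)) ≠ none
        then (if (some v : Option (ZMod 2)) = none then 1 - β else β / 2) else (0:ℝ)) = β / 2 := by
      intro v
      rw [if_pos (fun _ => Option.some_ne_none v), if_neg (Option.some_ne_none v)]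
    have hsum : (∑ v : ZMod 2, if c i ≠ 0 → (some v : Option (ZMod 2)) ≠ none
        then (if (some v : Option (ZMod 2)) = none then 1 - β else β / 2) else (0:ℝ)) = β := by
      simp only [heach]
      rw [Finset.sum_const, show (Finset.univ : Finset (ZMod 2)).card = 2 from rfl]
      simp; ring
    rw [hsum]
    by_cases h : c i ≠ 0 <;> simp [h]
  simp only [factor]
  rw [Finset.prod_ite, Finset.prod_const, Finset.prod_const_one, mul_one]
  rfl

section helper
open Finset

theorem stmt9_main (n l : ℕ) (G₀ : Matrix (Fin n) (Fin l) (ZMod 2)) (d₀ : ℕ)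
    (hd₀ : IsLeast
      {w : ℕ | ∃ c : Fin n → ZMod 2, Matrix.vecMul c G₀ = 0 ∧ c ≠ 0 ∧ wt c = w} d₀)
    (B : ℕ → ℕ)
    (hB : ∀ w, (B w : ℕ) =
      {c : Fin n → ZMod 2 | Matrix.vecMul c G₀ = 0 ∧ wt c = w}.ncard)
    (β : ℝ) (hβ₀ : 0 < β) (hβ₁ : β < 1)
    (t : Fin n → ZMod 2)
    (dualw : ∀ s : Fin n → Option (ZMod 2),
      (¬ ∃ d : Fin l → ZMod 2,
          ∀ i, ∀ v : ZMod 2, s i = some v → G₀.mulVec d i = t i + v) →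
      ∃ c : Fin n → ZMod 2, Matrix.vecMul c G₀ = 0 ∧ c ≠ 0 ∧
        ∀ i, c i ≠ 0 → s i ≠ none)
    (probs : ∀ c : Fin n → ZMod 2,
      ∑ s : Fin n → Option (ZMod 2),
        (if ∀ i, c i ≠ 0 → s i ≠ none then (1:ℝ) else 0) * defectWt n β s
      = β ^ wt c) :
    (∑ s : Fin n → Option (ZMod 2),
      if ¬ ∃ d : Fin l → ZMod 2,
          ∀ i, ∀ v : ZMod 2, s i = some v → G₀.mulVec d i = t i + v
      then defectWt n β s else 0)
    ≤ ∑ u ∈ Finset.Icc d₀ n, β ^ u * (1 - β) ^ (n - u) *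
        ∑ w ∈ Finset.Icc d₀ u, (B w : ℝ) * ((n - w).choose (u - w) : ℝ) := by
  classical
  set D : Finset (Fin n → ZMod 2) :=
    univ.filter (fun c => Matrix.vecMul c G₀ = 0 ∧ c ≠ 0) with hD
  have hwt_pos : ∀ c : Fin n → ZMod 2, c ≠ 0 → 1 ≤ wt c := by
    intro c hc
    rcases Function.ne_iff.1 hc with ⟨i, hi⟩
    exact Finset.card_pos.2 ⟨i, by simp only [supp, Finset.mem_filter, Finset.mem_univ, true_and]; simpa using hi⟩
  have hd₀pos : 1 ≤ d₀ := by
    obtain ⟨c, _, hc0, hcw⟩ := hd₀.1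
    exact hcw ▸ hwt_pos c hc0
  have hdw : ∀ s : Fin n → Option (ZMod 2), defectWt n β s ≥ 0 := by
    intro s
    apply Finset.prod_nonneg
    intro i _
    by_cases h : s i = none <;> simp [h] <;> linarith
  -- Step 1: pointwise bound by the union-bound sum
  have step1 : (∑ s : Fin n → Option (ZMod 2),
      if ¬ ∃ d : Fin l → ZMod 2,
          ∀ i, ∀ v : ZMod 2, s i = some v → G₀.mulVec d i = t i + v
      then defectWt n β s else 0)
      ≤ ∑ s : Fin n → Option (ZMod 2), ∑ c ∈ D,
          (if ∀ i, c i ≠ 0 → s i ≠ none then (1:ℝ) else 0) * defectWt n β s := by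
    apply Finset.sum_le_sum
    intro s _
    by_cases hbad : ¬ ∃ d : Fin l → ZMod 2,
        ∀ i, ∀ v : ZMod 2, s i = some v → G₀.mulVec d i = t i + v
    · rw [if_pos hbad]
      obtain ⟨c, hc1, hc2, hc3⟩ := dualw s hbad
      have hcD : c ∈ D := by rw [hD]; simp [hc1, hc2]
      calc defectWt n β s
          = (if ∀ i, c i ≠ 0 → s i ≠ none then (1:ℝ) else 0) * defectWt n β s := by
            rw [if_pos hc3, one_mul]
        _ ≤ ∑ c ∈ D, (if ∀ i, c i ≠ 0 → s i ≠ none then (1:ℝ) else 0) * defectWt n β s := by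
            apply Finset.single_le_sum (f := fun c =>
              (if ∀ i, c i ≠ 0 → s i ≠ none then (1:ℝ) else 0) * defectWt n β s)
              (fun c _ => ?_) hcD
            apply mul_nonneg _ (hdw s)
            split <;> norm_num
    · rw [if_neg hbad]
      apply Finset.sum_nonneg
      intro c _
      apply mul_nonneg _ (hdw s)
      split <;> norm_num
  -- Step 2: swap and evaluate
  have step2 : (∑ s : Fin n → Option (ZMod 2), ∑ c ∈ D,
          (if ∀ i, c i ≠ 0 → s i ≠ none then (1:ℝ) else 0) * defectWt n β s)
      = ∑ c ∈ D, β ^ wt c := by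
    rw [Finset.sum_comm]
    exact Finset.sum_congr rfl fun c _ => probs c
  -- Step 3: group by weight
  have step3 : (∑ c ∈ D, β ^ wt c) = ∑ w ∈ Finset.Icc d₀ n, (B w : ℝ) * β ^ w := by
    rw [← Finset.sum_fiberwise_of_maps_to (g := wt) (t := Finset.Icc d₀ n) ?_]
    · refine Finset.sum_congr rfl fun w hw => ?_
      have hcard : (D.filter (fun c => wt c = w)).card = B w := by
        rw [hB w]
        have hset : {c : Fin n → ZMod 2 | Matrix.vecMul c G₀ = 0 ∧ wt c = w}
            = ↑(D.filter (fun c => wt c = w)) := by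
          ext c
          simp only [Set.mem_setOf_eq, Finset.coe_filter, hD, Finset.mem_filter,
            Finset.mem_univ, true_and, Set.mem_setOf_eq]
          constructor
          · rintro ⟨h1, h2⟩
            refine ⟨⟨h1, ?_⟩, h2⟩
            intro hc0
            subst hc0
            rw [Finset.mem_Icc] at hw
            have : wt (0 : Fin n → ZMod 2) = 0 := by
              simp [wt, supp]
            omega
          · rintro ⟨⟨h1, _⟩, h2⟩; exact ⟨h1, h2⟩
        rw [hset, Set.ncard_coe_finset]
      rw [← hcard]
      rw [Finset.sum_congr rfl (fun c hc => by
        rw [(Finset.mem_filter.1 hc).2]), Finset.sum_const, nsmul_eq_mul]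
    · intro c hc
      rw [hD, Finset.mem_filter] at hc
      rw [Finset.mem_Icc]
      constructor
      · exact hd₀.2 ⟨c, hc.2.1, hc.2.2, rfl⟩
      · calc wt c ≤ (Finset.univ : Finset (Fin n)).card := Finset.card_le_card (Finset.filter_subset _ _)
          _ = n := by simp
  -- Step 4: the RHS equals the grouped sum
  have step4 : (∑ u ∈ Finset.Icc d₀ n, β ^ u * (1 - β) ^ (n - u) *
        ∑ w ∈ Finset.Icc d₀ u, (B w : ℝ) * ((n - w).choose (u - w) : ℝ))
      = ∑ w ∈ Finset.Icc d₀ n, (B w : ℝ) * β ^ w := by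
    have expand : ∀ u, β ^ u * (1 - β) ^ (n - u) *
        (∑ w ∈ Finset.Icc d₀ u, (B w : ℝ) * ((n - w).choose (u - w) : ℝ))
        = ∑ w ∈ Finset.Icc d₀ u,
            β ^ u * (1 - β) ^ (n - u) * ((B w : ℝ) * ((n - w).choose (u - w) : ℝ)) := by
      intro u; rw [Finset.mul_sum]
    simp only [expand]
    rw [Finset.sum_comm' (s := Finset.Icc d₀ n) (t := fun u => Finset.Icc d₀ u)
      (t' := Finset.Icc d₀ n) (s' := fun w => Finset.Icc w n) ?_]
    · refine Finset.sum_congr rfl fun w hw => ?_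
      rw [Finset.mem_Icc] at hw
      have key : (∑ u ∈ Finset.Icc w n,
          β ^ u * (1 - β) ^ (n - u) * ((B w : ℝ) * ((n - w).choose (u - w) : ℝ)))
          = (B w : ℝ) * β ^ w := by
        have : Finset.Icc w n = Finset.Ico w (n + 1) := by
          rw [Finset.Ico_add_one_right_eq_Icc]
        rw [this, Finset.sum_Ico_eq_sum_range]
        have hrange : n + 1 - w = (n - w) + 1 := by omega
        rw [hrange]
        have hterm : ∀ k, β ^ (w + k) * (1 - β) ^ (n - (w + k)) *
            ((B w : ℝ) * ((n - w).choose ((w + k) - w) : ℝ))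
            = (B w : ℝ) * β ^ w * (β ^ k * (1 - β) ^ ((n - w) - k) * ((n - w).choose k : ℝ)) := by
          intro k
          have h1 : n - (w + k) = (n - w) - k := by omega
          have h2 : (w + k) - w = k := by omega
          rw [h1, h2, pow_add]
          ring
        simp only [hterm]
        rw [← Finset.mul_sum]
        have hbin : (∑ k ∈ Finset.range ((n - w) + 1),
            β ^ k * (1 - β) ^ ((n - w) - k) * ((n - w).choose k : ℝ)) = 1 := by
          have := add_pow β (1 - β) (n - w)
          rw [show β + (1 - β) = 1 by ring, one_pow] at this
          exact this.symm
        rw [hbin, mul_one]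
      exact key
    · intro u w
      simp only [Finset.mem_Icc]
      omega
  rw [step4]
  rw [← step3, ← step2]
  exact step1
end helper

theorem stmt9 (n l : ℕ) (G₀ : Matrix (Fin n) (Fin l) (ZMod 2)) (d₀ : ℕ)
    (hdual : ∃ c : Fin n → ZMod 2, Matrix.vecMul c G₀ = 0 ∧ c ≠ 0)
    (hd₀ : IsLeast
      {w : ℕ | ∃ c : Fin n → ZMod 2, Matrix.vecMul c G₀ = 0 ∧ c ≠ 0 ∧ wt c = w} d₀)
    (B : ℕ → ℕ)
    (hB : ∀ w, (B w : ℕ) =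
      {c : Fin n → ZMod 2 | Matrix.vecMul c G₀ = 0 ∧ wt c = w}.ncard)
    (β : ℝ) (hβ₀ : 0 < β) (hβ₁ : β < 1)
    (t : Fin n → ZMod 2) :
    (∑ s : Fin n → Option (ZMod 2),
      if ¬ ∃ d : Fin l → ZMod 2,
          ∀ i, ∀ v : ZMod 2, s i = some v → G₀.mulVec d i = t i + v
      then defectWt n β s else 0)
    ≤ ∑ u ∈ Finset.Icc d₀ n, β ^ u * (1 - β) ^ (n - u) *
        ∑ w ∈ Finset.Icc d₀ u, (B w : ℝ) * ((n - w).choose (u - w) : ℝ) := by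
  exact stmt9_main n l G₀ d₀ hd₀ B hB β hβ₀ hβ₁ t
    (fun s h => dual_witness G₀ t s h) (fun c => prob_supp β c)
end

section
/- (Corollary 2) Let n, l, d₀ be nonnegative integers, let β be a real number with 0 ≤ β ≤ 1, and let B₀,w (d₀ ≤ w ≤ n) be real numbers with 0 ≤ B₀,w ≤ 2^{−l} · C(n,w) for each w. Then Σ_{u=d₀}^{n} β^{u} (1−β)^{n−u} Σ_{w=d₀}^{u} B₀,w · C(n−w, u−w) ≤ 2^{−l} (1+β)^{n}. -/
/-!
Since `C(n, w) C(n-w, u-w) = C(n, u) C(u, w)`, the bound on `B` turns the inner sum into at most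
`2^{-l} C(n, u) ∑_w C(u, w) ≤ 2^{-l} C(n, u) 2^u`. The outer sum is then dominated by the
binomial expansion of `(2β + (1 - β))^n = (1 + β)^n`, all of whose terms are nonnegative.
-/

open Finset

section

variable {R : Type*} [CommSemiring R] [PartialOrder R] [IsOrderedRing R]

theorem sum_choose_le_two_pow (s : Finset ℕ) (u : ℕ) (hs : s ⊆ range (u + 1)) :
    ∑ w ∈ s, (u.choose w : R) ≤ 2 ^ u := by
  calc ∑ w ∈ s, (u.choose w : R)
      ≤ ∑ w ∈ range (u + 1), (u.choose w : R) :=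
        sum_le_sum_of_subset_of_nonneg hs fun _ _ _ => Nat.cast_nonneg _
    _ = 2 ^ u := by simpa using congrArg (Nat.cast : ℕ → R) (Nat.sum_range_choose u)

theorem sum_mul_choose_sub_le {n u d₀ : ℕ} (c : R) (hc : 0 ≤ c) (B : ℕ → R)
    (hB : ∀ w ∈ Icc d₀ u, B w ≤ c * n.choose w) :
    ∑ w ∈ Icc d₀ u, B w * ((n - w).choose (u - w) : R) ≤ c * (n.choose u * 2 ^ u) := by
  calc ∑ w ∈ Icc d₀ u, B w * ((n - w).choose (u - w) : R)
      ≤ ∑ w ∈ Icc d₀ u, c * (n.choose u * u.choose w) := by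
        refine sum_le_sum fun w hw => ?_
        have hchoose : (n.choose u * u.choose w : R) = n.choose w * (n - w).choose (u - w) := by
          rw [← Nat.cast_mul, ← Nat.cast_mul, Nat.choose_mul (mem_Icc.mp hw).2]
        rw [hchoose, ← mul_assoc]
        exact mul_le_mul_of_nonneg_right (hB w hw) (Nat.cast_nonneg _)
    _ = c * (n.choose u * ∑ w ∈ Icc d₀ u, (u.choose w : R)) := by
        rw [mul_sum, mul_sum]
    _ ≤ c * (n.choose u * 2 ^ u) := by
        gcongr
        exact sum_choose_le_two_pow _ _ fun w hw => mem_range_succ_iff.mpr (mem_Icc.mp hw).2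

theorem sum_pow_mul_pow_mul_choose_le_add_pow {x y : R} (hx : 0 ≤ x) (hy : 0 ≤ y) (n : ℕ)
    (s : Finset ℕ) (hs : s ⊆ range (n + 1)) :
    ∑ u ∈ s, x ^ u * y ^ (n - u) * n.choose u ≤ (x + y) ^ n := by
  rw [add_pow]
  exact sum_le_sum_of_subset_of_nonneg hs fun _ _ _ => by positivity

end

theorem stmt10 (n l d₀ : ℕ) (β : ℝ) (hβ₀ : 0 ≤ β) (hβ₁ : β ≤ 1)
    (B : ℕ → ℝ)
    (hB : ∀ w, d₀ ≤ w → w ≤ n →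
      0 ≤ B w ∧ B w ≤ (2 : ℝ) ^ (-(l : ℤ)) * (n.choose w : ℝ)) :
    ∑ u ∈ Finset.Icc d₀ n, β ^ u * (1 - β) ^ (n - u) *
        ∑ w ∈ Finset.Icc d₀ u, B w * ((n - w).choose (u - w) : ℝ)
      ≤ (2 : ℝ) ^ (-(l : ℤ)) * (1 + β) ^ n := by
  set c : ℝ := 2 ^ (-(l : ℤ))
  have hc : 0 ≤ c := by positivity
  have h1β : 0 ≤ 1 - β := by linarith
  calc ∑ u ∈ Icc d₀ n, β ^ u * (1 - β) ^ (n - u) *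
        ∑ w ∈ Icc d₀ u, B w * ((n - w).choose (u - w) : ℝ)
      ≤ ∑ u ∈ Icc d₀ n, β ^ u * (1 - β) ^ (n - u) * (c * (n.choose u * 2 ^ u)) := by
        refine sum_le_sum fun u hu => mul_le_mul_of_nonneg_left ?_ (by positivity)
        exact sum_mul_choose_sub_le c hc B fun w hw =>
          (hB w (mem_Icc.mp hw).1 ((mem_Icc.mp hw).2.trans (mem_Icc.mp hu).2)).2
    _ = c * ∑ u ∈ Icc d₀ n, (2 * β) ^ u * (1 - β) ^ (n - u) * n.choose u := by
        rw [mul_sum]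
        exact sum_congr rfl fun u _ => by ring
    _ ≤ c * (2 * β + (1 - β)) ^ n := by
        gcongr
        exact sum_pow_mul_pow_mul_choose_le_add_pow (by positivity) h1β n _
          fun u hu => mem_range_succ_iff.mpr (mem_Icc.mp hu).2
    _ = c * (1 + β) ^ n := by ring_nf
end

section
/- (Corollary 3) Let n be a positive integer, let k be a real number with 0 ≤ k ≤ n, let α, β be nonnegative reals, and define f : [0, n−k] → ℝ by f(l) = 2^{−l}(1+β)^{n} + 2^{−(n−k−l)}(1+α)^{n}. Set ρ = (1+α)/(1+β). Then: (i) if ρ > 2^{(n−k)/n}, then f attains its minimum over [0, n−k] at l = 0; (ii) if ρ < 2^{−(n−k)/n}, then f attains its minimum over [0, n−k] at l = n−k; (iii) if 2^{−(n−k)/n} ≤ ρ ≤ 2^{(n−k)/n}, then the point ľ = (n·(1 − log₂ρ) − k)/2 lies in [0, n−k] and f attains its minimum over [0, n−k] at ľ. -/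
/-!
Writing `ρ = 2 ^ L` with `L = log₂ ρ` and `m = n - k`, one has
`f l = (1 + β) ^ n * (2 ^ (-l) + 2 ^ (c + l))` with `c = n L - m`. The function
`l ↦ 2 ^ (-l) + 2 ^ (c + l)` is symmetric about `-c / 2 = ľ`, decreasing to its left and increasing to
its right. The three conditions on `ρ` say exactly that `ľ < 0`, `ľ > m`, or `ľ ∈ [0, m]`.
-/

open Real Set

namespace Real

variable {b c : ℝ}

theorem rpow_neg_add_rpow_add_le (hb : 1 ≤ b) {x y : ℝ} (hxy : x ≤ y) (hc : -c ≤ x + y) :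
    b ^ (-x) + b ^ (c + x) ≤ b ^ (-y) + b ^ (c + y) := by
  have hb₀ : 0 < b := by linarith
  have hx : b ^ (-x) = b ^ (-x - y) * b ^ y := by rw [← rpow_add hb₀]; ring_nf
  have hy : b ^ (-y) = b ^ (-x - y) * b ^ x := by rw [← rpow_add hb₀]; ring_nf
  have hcx : b ^ (c + x) = b ^ c * b ^ x := rpow_add hb₀ c x
  have hcy : b ^ (c + y) = b ^ c * b ^ y := rpow_add hb₀ c y
  -- the difference of the two sides factors as (b^y - b^x) (b^c - b^(-x-y))
  have key : 0 ≤ (b ^ y - b ^ x) * (b ^ c - b ^ (-x - y)) :=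
    mul_nonneg (sub_nonneg.2 (rpow_le_rpow_of_exponent_le hb hxy))
      (sub_nonneg.2 (rpow_le_rpow_of_exponent_le hb (by linarith)))
  rw [hx, hy, hcx, hcy]
  linarith

theorem rpow_neg_add_rpow_add_reflect (x : ℝ) :
    b ^ (-(-c - x)) + b ^ (c + (-c - x)) = b ^ (-x) + b ^ (c + x) := by
  rw [show -(-c - x) = c + x by ring, show c + (-c - x) = -x by ring, add_comm]

theorem monotoneOn_rpow_neg_add_rpow_add (hb : 1 ≤ b) :
    MonotoneOn (fun x => b ^ (-x) + b ^ (c + x)) (Ici (-c / 2)) :=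
  fun x hx y hy hxy => rpow_neg_add_rpow_add_le hb hxy (by simp only [mem_Ici] at hx hy; linarith)

theorem antitoneOn_rpow_neg_add_rpow_add (hb : 1 ≤ b) :
    AntitoneOn (fun x => b ^ (-x) + b ^ (c + x)) (Iic (-c / 2)) := by
  intro x hx y hy hxy
  simp only [mem_Iic] at hx hy
  show b ^ (-y) + b ^ (c + y) ≤ b ^ (-x) + b ^ (c + x)
  rw [← rpow_neg_add_rpow_add_reflect x, ← rpow_neg_add_rpow_add_reflect y]
  exact rpow_neg_add_rpow_add_le hb (by linarith) (by linarith)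

theorem rpow_neg_add_rpow_add_min_le (hb : 1 ≤ b) (x : ℝ) :
    b ^ (-(-c / 2)) + b ^ (c + -c / 2) ≤ b ^ (-x) + b ^ (c + x) := by
  rcases le_total x (-c / 2) with hx | hx
  · exact antitoneOn_rpow_neg_add_rpow_add hb hx (le_refl _ : -c / 2 ≤ -c / 2) hx
  · exact monotoneOn_rpow_neg_add_rpow_add hb (le_refl _ : -c / 2 ≤ -c / 2) hx hx

end Real

theorem stmt15_general (n : ℕ) (hn : 0 < n) (k : ℝ)
    (α β : ℝ) (hα : 0 ≤ α) (hβ : 0 ≤ β) :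
    let f : ℝ → ℝ := fun l =>
      (2 : ℝ) ^ (-l) * (1 + β) ^ n + (2 : ℝ) ^ (-((n : ℝ) - k - l)) * (1 + α) ^ n
    let ρ : ℝ := (1 + α) / (1 + β)
    ((2 : ℝ) ^ (((n : ℝ) - k) / n) < ρ →
      ∀ x ∈ Set.Icc (0 : ℝ) ((n : ℝ) - k), f 0 ≤ f x) ∧
    (ρ < (2 : ℝ) ^ (-(((n : ℝ) - k) / n)) →
      ∀ x ∈ Set.Icc (0 : ℝ) ((n : ℝ) - k), f ((n : ℝ) - k) ≤ f x) ∧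
    ((2 : ℝ) ^ (-(((n : ℝ) - k) / n)) ≤ ρ → ρ ≤ (2 : ℝ) ^ (((n : ℝ) - k) / n) →
      ((n : ℝ) * (1 - Real.logb 2 ρ) - k) / 2 ∈ Set.Icc (0 : ℝ) ((n : ℝ) - k) ∧
      ∀ x ∈ Set.Icc (0 : ℝ) ((n : ℝ) - k),
        f (((n : ℝ) * (1 - Real.logb 2 ρ) - k) / 2) ≤ f x) := by
  intro f ρ
  set m : ℝ := n - k
  set L : ℝ := logb 2 ρ
  set c : ℝ := n * L - m
  set F : ℝ → ℝ := fun x => (2 : ℝ) ^ (-x) + (2 : ℝ) ^ (c + x)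
  have hn' : (0 : ℝ) < n := by exact_mod_cast hn
  have hB : 0 < (1 + β) ^ n := by positivity
  have hρ : 0 < ρ := by positivity
  have hf_eq : ∀ x, f x = (1 + β) ^ n * F x := by
    intro x
    have hA : (1 + α) ^ n = (1 + β) ^ n * (2 : ℝ) ^ (n * L) := by
      rw [mul_comm (n : ℝ), rpow_mul (by norm_num), rpow_logb (by norm_num) (by norm_num) hρ,
        rpow_natCast, div_pow, mul_div_cancel₀ _ hB.ne']
    simp only [f, F, hA, c, m]
    rw [mul_left_comm, ← rpow_add two_pos]
    ring_nf
  have hf_le : ∀ {x y}, F x ≤ F y → f x ≤ f y := fun h => by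
    rw [hf_eq, hf_eq]; exact mul_le_mul_of_nonneg_left h hB.le
  refine ⟨fun h x hx => hf_le ?_, fun h x hx => hf_le ?_, fun h₁ h₂ => ?_⟩
  · have hL : m < n * L := (div_lt_iff₀' hn').1 ((lt_logb_iff_rpow_lt one_lt_two hρ).2 h)
    exact monotoneOn_rpow_neg_add_rpow_add one_le_two (by simp only [mem_Ici]; linarith)
      (by simp only [mem_Ici]; linarith [hx.1]) hx.1
  · have hL : n * L < -m := by
      rw [← neg_div] at h
      exact (lt_div_iff₀' hn').1 ((logb_lt_iff_lt_rpow one_lt_two hρ).2 h)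
    exact antitoneOn_rpow_neg_add_rpow_add one_le_two (by simp only [mem_Iic]; linarith [hx.2])
      (by simp only [mem_Iic]; linarith) hx.2
  · have hlo : -m ≤ n * L := by
      rw [← neg_div] at h₁
      exact (div_le_iff₀' hn').1 ((le_logb_iff_rpow_le one_lt_two hρ).2 h₁)
    have hhi : n * L ≤ m := (le_div_iff₀' hn').1 ((logb_le_iff_le_rpow one_lt_two hρ).2 h₂)
    have hmid : (n * (1 - L) - k) / 2 = -c / 2 := by simp only [c, m]; ring
    rw [hmid]
    exact ⟨⟨by linarith, by linarith⟩, fun x _ => hf_le (rpow_neg_add_rpow_add_min_le one_le_two x)⟩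

theorem stmt15 (n : ℕ) (hn : 0 < n) (k : ℝ) (hk₀ : 0 ≤ k) (hkn : k ≤ n)
    (α β : ℝ) (hα : 0 ≤ α) (hβ : 0 ≤ β) :
    let f : ℝ → ℝ := fun l =>
      (2 : ℝ) ^ (-l) * (1 + β) ^ n + (2 : ℝ) ^ (-((n : ℝ) - k - l)) * (1 + α) ^ n
    let ρ : ℝ := (1 + α) / (1 + β)
    ((2 : ℝ) ^ (((n : ℝ) - k) / n) < ρ →
      ∀ x ∈ Set.Icc (0 : ℝ) ((n : ℝ) - k), f 0 ≤ f x) ∧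
    (ρ < (2 : ℝ) ^ (-(((n : ℝ) - k) / n)) →
      ∀ x ∈ Set.Icc (0 : ℝ) ((n : ℝ) - k), f ((n : ℝ) - k) ≤ f x) ∧
    ((2 : ℝ) ^ (-(((n : ℝ) - k) / n)) ≤ ρ → ρ ≤ (2 : ℝ) ^ (((n : ℝ) - k) / n) →
      ((n : ℝ) * (1 - Real.logb 2 ρ) - k) / 2 ∈ Set.Icc (0 : ℝ) ((n : ℝ) - k) ∧
      ∀ x ∈ Set.Icc (0 : ℝ) ((n : ℝ) - k),
        f (((n : ℝ) * (1 - Real.logb 2 ρ) - k) / 2) ≤ f x) :=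
  stmt15_general n hn k α β hα hβ
end

section
/- If A is a uniformly random u×l matrix over 𝔽₂ (all 2^{ul} matrices equally likely), then the probability that rank(A) < u is at most 2^{u−l}. -/
open scoped Classical
open Matrix

noncomputable def gmap (u l : ℕ) (c : Fin u → ZMod 2) :
    Matrix (Fin u) (Fin l) (ZMod 2) →ₗ[ZMod 2] (Fin l → ZMod 2) where
  toFun A := c ᵥ* A
  map_add' A B := by
    ext k
    simp [Matrix.vecMul, dotProduct, Finset.sum_add_distrib, mul_add]
  map_smul' s A := by
    ext k
    simp [Matrix.vecMul, dotProduct, Finset.mul_sum]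
    ring_nf
    simp [mul_comm, mul_left_comm]

lemma gmap_surj (u l : ℕ) (c : Fin u → ZMod 2) (hc : c ≠ 0) :
    Function.Surjective (gmap u l c) := by
  obtain ⟨i, hi⟩ := Function.ne_iff.mp hc
  have hci : c i = 1 := by
    have h2 : ∀ x : ZMod 2, x ≠ 0 → x = 1 := by decide
    exact h2 _ (by simpa using hi)
  intro v
  refine ⟨Matrix.of fun j k => if j = i then v k else 0, ?_⟩
  ext k
  simp only [gmap, LinearMap.coe_mk, AddHom.coe_mk, Matrix.vecMul, dotProduct]
  rw [Finset.sum_eq_single i] <;> simp [hci] <;> intros <;> simp_all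

lemma count_ker (u l : ℕ) (c : Fin u → ZMod 2) (hc : c ≠ 0) :
    (Finset.univ.filter
      fun A : Matrix (Fin u) (Fin l) (ZMod 2) => c ᵥ* A = 0).card * 2 ^ l
      = 2 ^ (u * l) := by
  have hcard : (Finset.univ.filter
      fun A : Matrix (Fin u) (Fin l) (ZMod 2) => c ᵥ* A = 0).card
      = Fintype.card (LinearMap.ker (gmap u l c)) := by
    rw [← Fintype.card_subtype]
    apply Fintype.card_congr
    apply Equiv.subtypeEquivRight
    intro A
    simp [LinearMap.mem_ker, gmap]
  have hker : Fintype.card (LinearMap.ker (gmap u l c))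
      = 2 ^ (Module.finrank (ZMod 2) (LinearMap.ker (gmap u l c))) := by
    have := Module.card_eq_pow_finrank (K := ZMod 2) (V := LinearMap.ker (gmap u l c))
    simpa using this
  have hrn := LinearMap.finrank_range_add_finrank_ker (gmap u l c)
  have hrange : Module.finrank (ZMod 2) (LinearMap.range (gmap u l c)) = l := by
    rw [LinearMap.range_eq_top.mpr (gmap_surj u l c hc), finrank_top]
    simp [Module.finrank_pi]
  have hdom : Module.finrank (ZMod 2) (Matrix (Fin u) (Fin l) (ZMod 2)) = u * l := by
    simp [Module.finrank_matrix]
  rw [hcard, hker, ← pow_add]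
  rw [hrange, hdom] at hrn
  rw [add_comm] at hrn
  rw [hrn]

lemma rank_lt_exists (u l : ℕ) (A : Matrix (Fin u) (Fin l) (ZMod 2))
    (h : A.rank < u) : ∃ c : Fin u → ZMod 2, c ≠ 0 ∧ c ᵥ* A = 0 := by
  by_contra hcon
  push_neg at hcon
  have hker : LinearMap.ker (Aᵀ.mulVecLin) = ⊥ := by
    rw [LinearMap.ker_eq_bot']
    intro c hc
    by_contra hc0
    exact hcon c hc0 (by rwa [← Matrix.mulVec_transpose, ← Matrix.mulVecLin_apply])
  have hrn := LinearMap.finrank_range_add_finrank_ker (Aᵀ.mulVecLin)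
  rw [hker] at hrn
  simp only [finrank_bot, add_zero, Module.finrank_pi, Fintype.card_fin] at hrn
  have : Aᵀ.rank = u := hrn
  rw [Matrix.rank_transpose] at this
  omega

theorem stmt16 (u l : ℕ) (hu : 0 < u) (hl : 0 < l) :
    ((Finset.univ.filter
        fun A : Matrix (Fin u) (Fin l) (ZMod 2) => A.rank < u).card : ℝ)
      / 2 ^ (u * l)
    ≤ (2 : ℝ) ^ ((u : ℤ) - (l : ℤ)) := by
  have hN : ∀ c : Fin u → ZMod 2, c ≠ 0 →
      (Finset.univ.filter
        fun A : Matrix (Fin u) (Fin l) (ZMod 2) => c ᵥ* A = 0).card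
        = 2 ^ ((u - 1) * l) := by
    intro c hc
    have h := count_ker u l c hc
    have : (u - 1) * l + l = u * l := by
      cases u with
      | zero => omega
      | succ n => simp [Nat.succ_mul]
    rw [← this, pow_add] at h
    exact Nat.eq_of_mul_eq_mul_right (by positivity) h
  -- subset of biUnion
  have hsub : (Finset.univ.filter
        fun A : Matrix (Fin u) (Fin l) (ZMod 2) => A.rank < u)
      ⊆ (Finset.univ.filter fun c : Fin u → ZMod 2 => c ≠ 0).biUnion
          (fun c => Finset.univ.filter
            fun A : Matrix (Fin u) (Fin l) (ZMod 2) => c ᵥ* A = 0) := by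
    intro A hA
    simp only [Finset.mem_filter, Finset.mem_univ, true_and] at hA
    obtain ⟨c, hc, hcA⟩ := rank_lt_exists u l A hA
    simp only [Finset.mem_biUnion, Finset.mem_filter, Finset.mem_univ, true_and]
    exact ⟨c, hc, hcA⟩
  have hcount : (Finset.univ.filter
        fun A : Matrix (Fin u) (Fin l) (ZMod 2) => A.rank < u).card
      ≤ 2 ^ u * 2 ^ ((u - 1) * l) := by
    calc _ ≤ _ := Finset.card_le_card hsub
    _ ≤ ∑ c ∈ Finset.univ.filter (fun c : Fin u → ZMod 2 => c ≠ 0),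
          (Finset.univ.filter
            fun A : Matrix (Fin u) (Fin l) (ZMod 2) => c ᵥ* A = 0).card :=
        Finset.card_biUnion_le
    _ = ∑ c ∈ Finset.univ.filter (fun c : Fin u → ZMod 2 => c ≠ 0),
          2 ^ ((u - 1) * l) := by
        apply Finset.sum_congr rfl
        intro c hc
        exact hN c (by simpa using hc)
    _ ≤ 2 ^ u * 2 ^ ((u - 1) * l) := by
        rw [Finset.sum_const, smul_eq_mul]
        apply Nat.mul_le_mul_right
        calc (Finset.univ.filter (fun c : Fin u → ZMod 2 => c ≠ 0)).card
            ≤ Finset.univ.card := Finset.card_filter_le _ _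
          _ = 2 ^ u := by simp [Fintype.card_fun]
  rw [div_le_iff₀ (by positivity)]
  calc ((Finset.univ.filter
        fun A : Matrix (Fin u) (Fin l) (ZMod 2) => A.rank < u).card : ℝ)
      ≤ ((2 ^ u * 2 ^ ((u - 1) * l) : ℕ) : ℝ) := by exact_mod_cast hcount
    _ = (2 : ℝ) ^ ((u : ℤ) - (l : ℤ)) * 2 ^ (u * l) := by
        push_cast
        rw [← zpow_natCast (2:ℝ) u, ← zpow_natCast (2:ℝ) ((u-1)*l),
          ← zpow_natCast (2:ℝ) (u*l), ← zpow_add₀ (by norm_num : (2:ℝ) ≠ 0),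
          ← zpow_add₀ (by norm_num : (2:ℝ) ≠ 0)]
        congr 1
        have : ((u - 1 : ℕ) : ℤ) = (u : ℤ) - 1 := by omega
        push_cast [this]
        ring
end
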